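/- arXiv:2203.13902 — 7 statements merged into one kernel-verified Lean document; each statement's English description precedes it below -/
import Mathlib

section
/- For every constant δ ∈ (0,1) there exists a constant c = c(δ) > 0 such that the following holds. Let (Ω, F, P) be a probability space with a filtration (F^t)_{t≥0}, and let (y^t)_{t≥0} be an adapted sequence of non-increasing vectors in ℝⁿ with Σ_{i=1}^n y_i^t = 0 and y^0 = 0 (with δn an integer and all relevant random variables integrable). Let p be a probability vector satisfying condition C1 with parameters δ and ε ∈ (0,1), let K > 0, κ > 0, and 0 < α < min(1, εδ/(8K)). Define Φ_i^t := e^{α y_i^t}, Ψ_i^t := e^{−α y_i^t}, Γ^t := Σ_{i=1}^n (Φ_i^t + Ψ_i^t). Assume that for every t ≥ 0, almost surely Σ_{i=1}^n E[Φ_i^{t+1} − Φ_i^t | F^t] ≤ Σ_{i=1}^n Φ_i^t·((p_i − 1/n)·κα + K·κ·α²/n) and Σ_{i=1}^n E[Ψ_i^{t+1} − Ψ_i^t | F^t] ≤ Σ_{i=1}^n Ψ_i^t·((1/n − p_i)·κα + K·κ·α²/n). Then for every t ≥ 0, almost surely E[Γ^{t+1} − Γ^t | F^t] ≤ −(εδ/8)·κ·(α/n)·Γ^t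 + c·κ·ε·α, and E[Γ^t] ≤ (8c/δ)·n. -/
open MeasureTheory Finset Real

set_option maxHeartbeats 1000000

lemma my_convexOn_sinh : ConvexOn ℝ (Set.Ici (0:ℝ)) Real.sinh := by
  apply convexOn_of_deriv2_nonneg (convex_Ici 0) Real.continuous_sinh.continuousOn
  · exact fun x _ => (Real.differentiable_sinh x).differentiableWithinAt
  · rw [Real.deriv_sinh]
    exact fun x _ => (Real.differentiable_cosh x).differentiableWithinAt
  · intro x hx
    have h2 : deriv^[2] Real.sinh = Real.sinh := by
      ext t
      simp [Function.iterate_succ, Real.deriv_sinh, Real.deriv_cosh]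
    rw [h2]
    rw [interior_Ici] at hx
    exact (Real.sinh_pos_iff.2 hx).le

lemma sinh_ratio {u v : ℝ} (hu : 0 ≤ u) (huv : u ≤ v) (hv : 0 < v) :
    v * Real.sinh u ≤ u * Real.sinh v := by
  have h1 : (0:ℝ) ≤ 1 - u / v := by
    rw [sub_nonneg, div_le_one hv]; exact huv
  have h2 : (0:ℝ) ≤ u / v := by positivity
  have h3 : (1 - u / v) + u / v = 1 := by ring
  have h := my_convexOn_sinh.2 (Set.mem_Ici.2 le_rfl : (0:ℝ) ∈ Set.Ici 0)
      (Set.mem_Ici.2 hv.le) h1 h2 h3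
  simp only [smul_eq_mul, mul_zero, zero_add, Real.sinh_zero] at h
  rw [div_mul_cancel₀ _ hv.ne'] at h
  calc v * Real.sinh u ≤ v * (u / v * Real.sinh v) := by
        apply mul_le_mul_of_nonneg_left _ hv.le
        simpa using h
    _ = u * Real.sinh v := by field_simp

lemma sinh_jensen {ι : Type*} (s : Finset ι) (g : ι → ℝ) (hg : ∀ i ∈ s, 0 ≤ g i)
    (hne : s.Nonempty) :
    (s.card : ℝ) * Real.sinh ((∑ i ∈ s, g i) / s.card) ≤ ∑ i ∈ s, Real.sinh (g i) := by
  have hc : (0:ℝ) < s.card := by exact_mod_cast Finset.card_pos.2 hne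
  have h := my_convexOn_sinh.map_sum_le (t := s) (w := fun _ => (s.card:ℝ)⁻¹) (p := g)
      (fun i _ => by positivity)
      (by rw [Finset.sum_const, nsmul_eq_mul]; field_simp)
      (fun i hi => Set.mem_Ici.2 (hg i hi))
  simp only [smul_eq_mul] at h
  have h1 : ∑ i ∈ s, (s.card:ℝ)⁻¹ * g i = (∑ i ∈ s, g i) / s.card := by
    rw [← Finset.mul_sum]; field_simp
  rw [h1] at h
  have h2 : ∑ i ∈ s, (s.card:ℝ)⁻¹ * Real.sinh (g i)
      = (∑ i ∈ s, Real.sinh (g i)) / s.card := by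
    rw [← Finset.mul_sum]; field_simp
  rw [h2] at h
  rw [mul_comm]
  exact (le_div_iff₀ hc).mp h

noncomputable def wcoef (n i : ℕ) : ℝ :=
  ((min (i+1) (n-(i+1)) : ℕ) : ℝ) - ((min i (n-i) : ℕ) : ℝ)

lemma wcoef_one {n i : ℕ} (h : 2*(i+1) ≤ n) : wcoef n i = 1 := by
  unfold wcoef
  rw [min_eq_left (by omega), min_eq_left (by omega)]
  push_cast; ring

lemma wcoef_negone {n i : ℕ} (hi : i < n) (h : n ≤ 2*i) : wcoef n i = -1 := by
  unfold wcoef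
  rw [min_eq_right (by omega), min_eq_right (by omega)]
  have e1 : n - i = (n - (i+1)) + 1 := by omega
  rw [e1]; push_cast; ring

lemma wcoef_zero {n i : ℕ} (h : 2*i+1 = n) : wcoef n i = 0 := by
  unfold wcoef
  rw [min_eq_right (by omega), min_eq_left (by omega)]
  have e1 : n - (i+1) = i := by omega
  rw [e1]; ring

lemma wcoef_ge_neg_one {n i : ℕ} (hi : i < n) : -1 ≤ wcoef n i := by
  rcases (by omega : 2*(i+1) ≤ n ∨ n ≤ 2*i ∨ 2*i+1 = n) with h | h | h
  · rw [wcoef_one h]; norm_num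
  · rw [wcoef_negone hi h]
  · rw [wcoef_zero h]; norm_num

lemma wcoef_reflect {n i : ℕ} (hi : i < n) : wcoef n (n-1-i) = - wcoef n i := by
  rcases (by omega : 2*(i+1) ≤ n ∨ n ≤ 2*i ∨ 2*i+1 = n) with h | h | h
  · rw [wcoef_one h, wcoef_negone (by omega) (by omega)]
  · rw [wcoef_negone hi h, wcoef_one (by omega)]; ring
  · have e : n - 1 - i = i := by omega
    rw [e, wcoef_zero h]; norm_num

lemma core_heart (n : ℕ) (x : ℕ → ℝ)
    (hmono : ∀ i j, i ≤ j → j < n → x j ≤ x i)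
    (hsum : ∑ i ∈ range n, x i = 0)
    (hh : 1 ≤ n/2) (hc : 0 < x (n/2)) :
    (1/4) * ∑ i ∈ range n, |Real.sinh (x i)| ≤ ∑ i ∈ range n, wcoef n i * Real.sinh (x i) := by
  set h := n/2 with hhdef
  have hn2 : 2 ≤ n := by omega
  have hhn : h < n := by omega
  have hn2h : n ≤ 2*h + 1 := by omega
  have h2h : 2*h ≤ n := by omega
  set M := x (h-1) with hMdef
  have hMx : 0 < M := lt_of_lt_of_le hc (hmono (h-1) h (by omega) hhn)
  have hsinhM : 0 < Real.sinh M := Real.sinh_pos_iff.2 hMx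
  set BP := (Finset.Ico h n).filter (fun i => 0 < x i) with hBPdef
  set NEG := (range n).filter (fun i => x i < 0) with hNEGdef
  set POS := (range n).filter (fun i => 0 < x i) with hPOSdef
  set S := ∑ i ∈ NEG, (-x i) with hSdef
  set Sb := ∑ i ∈ BP, x i with hSbdef
  set N := ∑ i ∈ NEG, Real.sinh (-x i) with hNdef
  -- positives sum equals S
  have hnegsum : ∑ i ∈ (range n).filter (fun i => ¬ 0 < x i), x i = -S := by
    have hsub : NEG ⊆ (range n).filter (fun i => ¬ 0 < x i) := by
      intro i hi
      simp only [hNEGdef, Finset.mem_filter] at hi ⊢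
      exact ⟨hi.1, by linarith [hi.2]⟩
    have := Finset.sum_subset hsub (fun i hi hni => by
      simp only [Finset.mem_filter, hNEGdef] at hi hni
      have : x i = 0 := by
        rcases hi with ⟨h1, h2⟩
        by_contra hne
        exact hni ⟨h1, lt_of_le_of_ne (not_lt.1 h2) hne⟩
      exact this)
    rw [← this, hSdef, ← Finset.sum_neg_distrib]
    simp
  have hSpos : ∑ i ∈ POS, x i = S := by
    have := Finset.sum_filter_add_sum_filter_not (range n) (fun i => 0 < x i) x
    rw [hnegsum, hsum] at this
    linarith [this]
  -- top indices are positive and ≥ M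
  have htopM : ∀ i ∈ range h, M ≤ x i := by
    intro i hi
    rw [Finset.mem_range] at hi
    exact hmono i (h-1) (by omega) (by omega)
  have htoppos : ∀ i ∈ range h, 0 < x i := fun i hi => lt_of_lt_of_le hMx (htopM i hi)
  -- BP values ≤ M
  have hbpM : ∀ i ∈ BP, x i ≤ M := by
    intro i hi
    simp only [hBPdef, Finset.mem_filter, Finset.mem_Ico] at hi
    exact hmono (h-1) i (by omega) hi.1.2
  have hbppos : ∀ i ∈ BP, 0 < x i := by
    intro i hi; simp only [hBPdef, Finset.mem_filter] at hi; exact hi.2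
  have hSb0 : 0 ≤ Sb := Finset.sum_nonneg (fun i hi => (hbppos i hi).le)
  -- NEG ⊆ Ico h n
  have hnegIco : NEG ⊆ Finset.Ico h n := by
    intro i hi
    simp only [hNEGdef, Finset.mem_filter, Finset.mem_range] at hi
    rw [Finset.mem_Ico]
    refine ⟨?_, hi.1⟩
    by_contra hlt
    push_neg at hlt
    have := hmono i h (by omega) hhn
    linarith [hi.2]
  -- h*M + Sb ≤ S
  have hhM : (h:ℝ) * M ≤ ∑ i ∈ range h, x i := by
    have := Finset.card_nsmul_le_sum (range h) x M htopM
    rwa [Finset.card_range, nsmul_eq_mul] at this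
  have hdisjTB : Disjoint (range h) BP := by
    rw [Finset.disjoint_left]
    intro i hi hbp
    rw [Finset.mem_range] at hi
    simp only [hBPdef, Finset.mem_filter, Finset.mem_Ico] at hbp
    omega
  have hsubPOS : range h ∪ BP ⊆ POS := by
    intro i hi
    rcases Finset.mem_union.1 hi with hi | hi
    · simp only [hPOSdef, Finset.mem_filter, Finset.mem_range]
      exact ⟨by rw [Finset.mem_range] at hi; omega, htoppos i hi⟩
    · simp only [hPOSdef, Finset.mem_filter, Finset.mem_range]
      simp only [hBPdef, Finset.mem_filter, Finset.mem_Ico] at hi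
      exact ⟨hi.1.2, hi.2⟩
  have hSlow : (h:ℝ) * M + Sb ≤ S := by
    have h1 : ∑ i ∈ range h ∪ BP, x i ≤ ∑ i ∈ POS, x i := by
      apply Finset.sum_le_sum_of_subset_of_nonneg hsubPOS
      intro i hi _
      simp only [hPOSdef, Finset.mem_filter] at hi
      exact hi.2.le
    rw [Finset.sum_union hdisjTB, hSpos] at h1
    linarith [hhM]
  -- cards
  have hBPmem : h ∈ BP := by
    simp only [hBPdef, Finset.mem_filter, Finset.mem_Ico]
    exact ⟨⟨le_rfl, hhn⟩, hc⟩
  have hdisjBN : Disjoint BP NEG := by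
    rw [Finset.disjoint_left]
    intro i hi hneg
    simp only [hBPdef, Finset.mem_filter] at hi
    simp only [hNEGdef, Finset.mem_filter] at hneg
    linarith [hi.2, hneg.2]
  have hcards : BP.card + NEG.card ≤ n - h := by
    have hsub2 : BP ∪ NEG ⊆ Finset.Ico h n := by
      intro i hi
      rcases Finset.mem_union.1 hi with hi | hi
      · simp only [hBPdef, Finset.mem_filter] at hi; exact hi.1
      · exact hnegIco hi
    have := Finset.card_le_card hsub2
    rw [Finset.card_union_of_disjoint hdisjBN] at this
    rwa [Nat.card_Ico] at this
  have hNEGne : NEG.Nonempty := by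
    rw [← Finset.card_pos]
    by_contra he
    push_neg at he
    interval_cases hcard : NEG.card
    · have : S = 0 := by
        rw [hSdef, Finset.card_eq_zero.1 hcard, Finset.sum_empty]
      have hh1 : (1:ℝ) ≤ (h:ℝ) := by exact_mod_cast hh
      nlinarith [hSlow, hMx, hSb0]
  have h1N : 1 ≤ NEG.card := Finset.card_pos.2 hNEGne
  have hBPcard : BP.card ≤ h := by omega
  have htcard : NEG.card ≤ h := by
    have : 1 ≤ BP.card := Finset.card_pos.2 ⟨h, hBPmem⟩
    omega
  have hSbM : Sb ≤ (h:ℝ) * M := by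
    have := Finset.sum_le_card_nsmul BP x M hbpM
    rw [nsmul_eq_mul] at this
    have hc2 : (BP.card:ℝ) ≤ (h:ℝ) := by exact_mod_cast hBPcard
    nlinarith [hMx]
  have hS2Sb : 2 * Sb ≤ S := by linarith
  -- Jensen on NEG
  have ht0 : (0:ℝ) < NEG.card := by
    have := Finset.card_pos.2 hNEGne; exact_mod_cast this
  have hJ : (NEG.card:ℝ) * Real.sinh (S / NEG.card) ≤ N := by
    have := sinh_jensen NEG (fun i => -x i) (fun i hi => by
      simp only [hNEGdef, Finset.mem_filter] at hi
      show (0:ℝ) ≤ -x i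
      linarith [hi.2]) hNEGne
    simpa [hSdef, hNdef] using this
  have hMSt : M ≤ S / NEG.card := by
    rw [le_div_iff₀ ht0]
    have hcR : (NEG.card:ℝ) ≤ (h:ℝ) := by exact_mod_cast htcard
    nlinarith [hMx, hSb0]
  have hNS : S * Real.sinh M ≤ M * N := by
    have hr := sinh_ratio hMx.le hMSt (lt_of_lt_of_le hMx hMSt)
    -- (S/t) * sinh M ≤ M * sinh (S/t)
    have h2 : (NEG.card:ℝ) * ((S / NEG.card) * Real.sinh M) ≤ (NEG.card:ℝ) * (M * Real.sinh (S / NEG.card)) :=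
      mul_le_mul_of_nonneg_left hr ht0.le
    have h3 : (NEG.card:ℝ) * ((S / NEG.card) * Real.sinh M) = S * Real.sinh M := by
      field_simp
    have h4 : (NEG.card:ℝ) * (M * Real.sinh (S / NEG.card)) ≤ M * N := by
      have := mul_le_mul_of_nonneg_left hJ hMx.le
      nlinarith [this]
    linarith [h2, h3.symm.le, h4]
  -- cost bound
  have hcost : M * (∑ i ∈ BP, Real.sinh (x i)) ≤ Sb * Real.sinh M := by
    have hterm : ∀ i ∈ BP, M * Real.sinh (x i) ≤ x i * Real.sinh M := by
      intro i hi
      exact sinh_ratio (hbppos i hi).le (hbpM i hi) hMx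
    calc M * (∑ i ∈ BP, Real.sinh (x i)) = ∑ i ∈ BP, M * Real.sinh (x i) := by
          rw [Finset.mul_sum]
      _ ≤ ∑ i ∈ BP, x i * Real.sinh M := Finset.sum_le_sum hterm
      _ = Sb * Real.sinh M := by rw [hSbdef, Finset.sum_mul]
  -- now assemble
  rw [← sub_nonneg]
  have hgoal : ∑ i ∈ range n, wcoef n i * Real.sinh (x i)
        - 1/4 * ∑ i ∈ range n, |Real.sinh (x i)|
      = ∑ i ∈ range n, (wcoef n i * Real.sinh (x i) - 1/4 * |Real.sinh (x i)|) := by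
    rw [Finset.sum_sub_distrib, Finset.mul_sum]
  rw [hgoal]
  set F : ℕ → ℝ := fun i => wcoef n i * Real.sinh (x i) - 1/4 * |Real.sinh (x i)| with hFdef
  set rest := (Finset.Ico h n).filter (fun i => ¬ 0 < x i) with hrestdef
  have hsplit1 : ∑ i ∈ range n, F i = ∑ i ∈ range h, F i + ∑ i ∈ Finset.Ico h n, F i := by
    rw [Finset.range_eq_Ico, ← Finset.sum_Ico_consecutive F (Nat.zero_le h) (le_of_lt hhn),
      ← Finset.range_eq_Ico]
  have hsplit2 : ∑ i ∈ Finset.Ico h n, F i = ∑ i ∈ BP, F i + ∑ i ∈ rest, F i := by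
    rw [hBPdef, hrestdef, Finset.sum_filter_add_sum_filter_not]
  have hB1 : 0 ≤ ∑ i ∈ range h, F i := by
    apply Finset.sum_nonneg
    intro i hi
    have hw : wcoef n i = 1 := wcoef_one (by rw [Finset.mem_range] at hi; omega)
    have hs : 0 ≤ Real.sinh (x i) := Real.sinh_nonneg_iff.2 (htoppos i hi).le
    show 0 ≤ wcoef n i * Real.sinh (x i) - 1/4 * |Real.sinh (x i)|
    rw [hw, abs_of_nonneg hs]
    linarith
  have hB2 : -(5/4) * (∑ i ∈ BP, Real.sinh (x i)) ≤ ∑ i ∈ BP, F i := by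
    rw [Finset.mul_sum]
    apply Finset.sum_le_sum
    intro i hi
    have hin : i < n := by
      have := hbpM i hi
      simp only [hBPdef, Finset.mem_filter, Finset.mem_Ico] at hi
      exact hi.1.2
    have hs : 0 ≤ Real.sinh (x i) := Real.sinh_nonneg_iff.2 (hbppos i hi).le
    have hw : -1 ≤ wcoef n i := wcoef_ge_neg_one hin
    show -(5/4) * Real.sinh (x i) ≤ wcoef n i * Real.sinh (x i) - 1/4 * |Real.sinh (x i)|
    rw [abs_of_nonneg hs]
    have := mul_le_mul_of_nonneg_right hw hs
    linarith
  have hrestF : ∀ i ∈ rest, F i = (3/4) * Real.sinh (-x i) := by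
    intro i hi
    simp only [hrestdef, Finset.mem_filter, Finset.mem_Ico] at hi
    have hxle : x i ≤ 0 := le_of_not_gt hi.2
    have hii : h + 1 ≤ i := by
      rcases Nat.eq_or_lt_of_le hi.1.1 with he | hlt
      · exfalso; rw [← he] at hxle; linarith
      · omega
    have hw : wcoef n i = -1 := wcoef_negone hi.1.2 (by omega)
    have hs : Real.sinh (x i) ≤ 0 := by
      rw [← Real.sinh_zero]
      exact Real.sinh_le_sinh.2 hxle
    show wcoef n i * Real.sinh (x i) - 1/4 * |Real.sinh (x i)| = (3/4) * Real.sinh (-x i)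
    rw [hw, abs_of_nonpos hs, Real.sinh_neg]
    ring
  have hB3 : (3/4) * N ≤ ∑ i ∈ rest, F i := by
    rw [Finset.sum_congr rfl hrestF]
    have hsub : NEG ⊆ rest := by
      intro i hi
      have hico := hnegIco hi
      simp only [hNEGdef, Finset.mem_filter] at hi
      simp only [hrestdef, Finset.mem_filter]
      exact ⟨hico, by linarith [hi.2]⟩
    have hmono2 : ∑ i ∈ NEG, Real.sinh (-x i) ≤ ∑ i ∈ rest, Real.sinh (-x i) := by
      apply Finset.sum_le_sum_of_subset_of_nonneg hsub
      intro i hi _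
      simp only [hrestdef, Finset.mem_filter] at hi
      have : (0:ℝ) ≤ -x i := by linarith [le_of_not_gt hi.2]
      exact Real.sinh_nonneg_iff.2 this
    rw [← Finset.mul_sum]
    have hN' : N ≤ ∑ i ∈ rest, Real.sinh (-x i) := hmono2
    linarith
  have hkey : (5/4) * (∑ i ∈ BP, Real.sinh (x i)) ≤ (3/4) * N := by
    set CBP := ∑ i ∈ BP, Real.sinh (x i) with hCBP
    have hCBP0 : 0 ≤ CBP :=
      Finset.sum_nonneg (fun i hi => Real.sinh_nonneg_iff.2 (hbppos i hi).le)
    -- M*(5/4)*CBP ≤ (5/4) Sb sinhM ≤ (5/8) S sinhM ≤ (3/4) S sinhM ≤ (3/4) M N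
    have h1 : (5/4) * (M * CBP) ≤ (5/4) * (Sb * Real.sinh M) := by nlinarith [hcost]
    have h2 : (5/4) * (Sb * Real.sinh M) ≤ (5/8) * (S * Real.sinh M) := by
      nlinarith [mul_le_mul_of_nonneg_right hS2Sb hsinhM.le]
    have h3 : (5/8) * (S * Real.sinh M) ≤ (3/4) * (S * Real.sinh M) := by
      nlinarith [hS2Sb, hSb0, hsinhM]
    have h4 : (3/4) * (S * Real.sinh M) ≤ (3/4) * (M * N) := by nlinarith [hNS]
    have : (5/4) * (M * CBP) ≤ (3/4) * (M * N) := by linarith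
    nlinarith [hMx]
  rw [hsplit1, hsplit2]
  linarith [hB1, hB2, hB3, hkey]

lemma core (n : ℕ) (x : ℕ → ℝ)
    (hmono : ∀ i j, i ≤ j → j < n → x j ≤ x i)
    (hsum : ∑ i ∈ range n, x i = 0) :
    (1/4) * ∑ i ∈ range n, |Real.sinh (x i)| ≤ ∑ i ∈ range n, wcoef n i * Real.sinh (x i) := by
  rcases Nat.lt_or_ge n 2 with hn | hn
  · interval_cases n
    · simp
    · have h0 : x 0 = 0 := by simpa using hsum
      simp [h0]
  · by_cases hc1 : 0 < x (n/2)
    · exact core_heart n x hmono hsum (by omega) hc1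
    · by_cases hc2 : x (n - n/2 - 1) < 0
      · set x' : ℕ → ℝ := fun i => -x (n - 1 - i) with hx'
        have hmono' : ∀ i j, i ≤ j → j < n → x' j ≤ x' i := by
          intro i j hij hj
          show -x (n-1-j) ≤ -x (n-1-i)
          have := hmono (n-1-j) (n-1-i) (by omega) (by omega)
          linarith
        have hsum' : ∑ i ∈ range n, x' i = 0 := by
          have hrefl := Finset.sum_range_reflect (fun i => x i) n
          calc ∑ i ∈ range n, x' i = -∑ i ∈ range n, x (n-1-i) := by
                rw [← Finset.sum_neg_distrib]
            _ = 0 := by rw [hrefl, hsum, neg_zero]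
        have hc1' : 0 < x' (n/2) := by
          show 0 < -x (n - 1 - n/2)
          have e : n - 1 - n/2 = n - n/2 - 1 := by omega
          rw [e]; linarith
        have hmain := core_heart n x' hmono' hsum' (by omega) hc1'
        have e1 : ∑ i ∈ range n, |Real.sinh (x' i)| = ∑ i ∈ range n, |Real.sinh (x i)| := by
          rw [← Finset.sum_range_reflect (fun i => |Real.sinh (x' i)|) n]
          apply Finset.sum_congr rfl
          intro i hi
          rw [Finset.mem_range] at hi
          have e : n - 1 - (n - 1 - i) = i := by omega
          show |Real.sinh (x' (n-1-i))| = |Real.sinh (x i)|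
          rw [hx']
          simp only [e, Real.sinh_neg, abs_neg]
        have e2 : ∑ i ∈ range n, wcoef n i * Real.sinh (x' i)
            = ∑ i ∈ range n, wcoef n i * Real.sinh (x i) := by
          rw [← Finset.sum_range_reflect (fun i => wcoef n i * Real.sinh (x' i)) n]
          apply Finset.sum_congr rfl
          intro i hi
          rw [Finset.mem_range] at hi
          have e : n - 1 - (n - 1 - i) = i := by omega
          show wcoef n (n-1-i) * Real.sinh (x' (n-1-i)) = wcoef n i * Real.sinh (x i)
          rw [wcoef_reflect hi, hx']
          simp only [e, Real.sinh_neg]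
          ring
        rw [e1, e2] at hmain
        exact hmain
      · push_neg at hc1 hc2
        rw [← sub_nonneg]
        have hgoal : ∑ i ∈ range n, wcoef n i * Real.sinh (x i)
              - 1/4 * ∑ i ∈ range n, |Real.sinh (x i)|
            = ∑ i ∈ range n, (wcoef n i * Real.sinh (x i) - 1/4 * |Real.sinh (x i)|) := by
          rw [Finset.sum_sub_distrib, Finset.mul_sum]
        rw [hgoal]
        apply Finset.sum_nonneg
        intro i hi
        rw [Finset.mem_range] at hi
        rcases (by omega : 2*(i+1) ≤ n ∨ n ≤ 2*i ∨ 2*i+1 = n) with hcase | hcase | hcase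
        · have hw : wcoef n i = 1 := wcoef_one hcase
          have hx0 : 0 ≤ x i := le_trans hc2 (hmono i (n - n/2 - 1) (by omega) (by omega))
          have hs : 0 ≤ Real.sinh (x i) := Real.sinh_nonneg_iff.2 hx0
          rw [hw, abs_of_nonneg hs]
          linarith
        · have hw : wcoef n i = -1 := wcoef_negone hi hcase
          have hx0 : x i ≤ 0 := le_trans (hmono (n/2) i (by omega) hi) hc1
          have hs : Real.sinh (x i) ≤ 0 := by
            rw [← Real.sinh_zero]; exact Real.sinh_le_sinh.2 hx0
          rw [hw, abs_of_nonpos hs]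
          linarith
        · have hw : wcoef n i = 0 := wcoef_zero hcase
          have hx1 : x i ≤ 0 := by
            have e : i = n/2 := by omega
            rw [e]; exact hc1
          have hx2 : 0 ≤ x i := by
            have e : i = n - n/2 - 1 := by omega
            rw [e]; exact hc2
          have : x i = 0 := le_antisymm hx1 hx2
          rw [hw, this, Real.sinh_zero]
          simp

lemma abel_le_zero (n : ℕ) (a D : ℕ → ℝ)
    (hA : ∀ k, k ≤ n → (∑ i ∈ range k, a i) ≤ 0)
    (hAn : ∑ i ∈ range n, a i = 0)
    (hD : ∀ k, k + 1 < n → D (k+1) ≤ D k) :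
    ∑ i ∈ range n, a i * D i ≤ 0 := by
  have hid : ∑ i ∈ range n, (a i * D i - (∑ j ∈ range (i+1), a j) * (D i - D (i+1)))
      = (∑ j ∈ range n, a j) * D n - (∑ j ∈ range 0, a j) * D 0 := by
    rw [← Finset.sum_range_sub (fun k => (∑ j ∈ range k, a j) * D k) n]
    apply Finset.sum_congr rfl
    intro i _
    have ha : ∑ j ∈ range (i+1), a j = (∑ j ∈ range i, a j) + a i :=
      Finset.sum_range_succ a i
    rw [ha]; ring
  rw [Finset.sum_sub_distrib] at hid
  rw [hAn] at hid
  simp only [Finset.range_zero, Finset.sum_empty, zero_mul, sub_zero] at hid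
  have h2 : ∑ i ∈ range n, a i * D i
      = ∑ i ∈ range n, (∑ j ∈ range (i+1), a j) * (D i - D (i+1)) := by linarith
  rw [h2]
  apply Finset.sum_nonpos
  intro i hi
  rw [Finset.mem_range] at hi
  rcases Nat.lt_or_ge (i+1) n with h1 | h1
  · have hA1 := hA (i+1) (by omega)
    have hD1 := hD i h1
    nlinarith
  · have he : i + 1 = n := by omega
    rw [he, hAn]
    simp

lemma key_range (n : ℕ) (δ ε : ℝ) (hδ0 : 0 < δ) (hδ1 : δ < 1) (hε0 : 0 < ε) (hε1 : ε < 1)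
    (m : ℕ) (hm : (m:ℝ) = δ * n) (hn : 1 ≤ n)
    (q : ℕ → ℝ) (hqsum : ∑ i ∈ range n, q i = 1)
    (hpre : ∀ k, 1 ≤ k → k ≤ m → ∑ i ∈ range k, q i ≤ (1-ε) * k / n)
    (hsuf : ∀ k, m ≤ k → k ≤ n - 1 →
      ∑ i ∈ range k, q i ≤ (k:ℝ)/n - (ε*δ/(1-δ)) * ((n:ℝ)-k)/n)
    (v : ℕ → ℝ) (hvmono : ∀ i j, i ≤ j → j < n → v j ≤ v i)
    (hvsum : ∑ i ∈ range n, v i = 0)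
    (α : ℝ) (hα : 0 < α) :
    ∑ i ∈ range n, (q i - 1/n) * (2 * Real.sinh (α * v i))
      ≤ -(ε*δ/(2*n)) * (∑ i ∈ range n, Real.cosh (α * v i)) + ε*δ/2 := by
  have hn0 : (0:ℝ) < n := by exact_mod_cast hn
  have hm1 : 1 ≤ m := by
    rcases Nat.eq_zero_or_pos m with h0 | h
    · exfalso
      rw [h0] at hm
      simp only [Nat.cast_zero] at hm
      nlinarith [mul_pos hδ0 hn0]
    · exact h
  have hmn : m ≤ n - 1 := by
    by_contra hc
    push_neg at hc
    have : (n:ℝ) ≤ (m:ℝ) := by exact_mod_cast (by omega : n ≤ m)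
    nlinarith
  set x : ℕ → ℝ := fun i => α * v i with hxdef
  have hxmono : ∀ i j, i ≤ j → j < n → x j ≤ x i := by
    intro i j hij hj
    have := hvmono i j hij hj
    show α * v j ≤ α * v i
    nlinarith
  have hxsum : ∑ i ∈ range n, x i = 0 := by
    show ∑ i ∈ range n, α * v i = 0
    rw [← Finset.mul_sum, hvsum, mul_zero]
  have hwsum : ∀ k, ∑ i ∈ range k, wcoef n i = ((min k (n-k) : ℕ) : ℝ) := by
    intro k
    have h := Finset.sum_range_sub (fun j => ((min j (n-j) : ℕ) : ℝ)) k
    rw [show (∑ i ∈ range k, wcoef n i) = ∑ i ∈ range k,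
      (((min (i+1) (n-(i+1)) : ℕ) : ℝ) - ((min i (n-i) : ℕ) : ℝ)) from rfl, h]
    simp
  set a : ℕ → ℝ := fun i => (q i - 1/n) + (ε*δ/n) * wcoef n i with hadef
  have hsplit : ∀ k, ∑ i ∈ range k, a i
      = (∑ i ∈ range k, q i) - k/n + (ε*δ/n) * ((min k (n-k) : ℕ) : ℝ) := by
    intro k
    show ∑ i ∈ range k, ((q i - 1/n) + (ε*δ/n) * wcoef n i) = _
    rw [Finset.sum_add_distrib, Finset.sum_sub_distrib, ← Finset.mul_sum, hwsum]
    simp only [Finset.sum_const, Finset.card_range, nsmul_eq_mul, mul_one_div]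
    try ring
  have hAn : ∑ i ∈ range n, a i = 0 := by
    rw [hsplit n, hqsum]
    simp [Nat.sub_self, div_self hn0.ne']
  have hAk : ∀ k, k ≤ n → (∑ i ∈ range k, a i) ≤ 0 := by
    intro k hk
    rw [hsplit k]
    have hmn0 : (0:ℝ) ≤ ((min k (n-k) : ℕ) : ℝ) := Nat.cast_nonneg _
    have hminle1 : ((min k (n-k) : ℕ) : ℝ) ≤ (k:ℝ) :=
      Nat.cast_le.2 (min_le_left _ _)
    have hminle2 : ((min k (n-k) : ℕ) : ℝ) ≤ (n:ℝ) - (k:ℝ) := by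
      have h1 : ((min k (n-k) : ℕ) : ℝ) ≤ ((n - k : ℕ) : ℝ) :=
        Nat.cast_le.2 (min_le_right _ _)
      rw [Nat.cast_sub hk] at h1
      exact h1
    rcases Nat.eq_zero_or_pos k with hk0 | hk1
    · subst hk0
      simp
    · rcases Nat.lt_or_ge k (m+1) with hkm | hkm
      · have hp := hpre k hk1 (by omega)
        have h5 : ε*δ/n * ((min k (n-k):ℕ):ℝ) ≤ ε * (k:ℝ) / n := by
          rw [div_mul_eq_mul_div]
          apply (div_le_div_iff_of_pos_right hn0).2
          nlinarith [mul_le_mul_of_nonneg_left hminle1 (by positivity : (0:ℝ) ≤ ε*δ),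
            mul_nonneg hε0.le (Nat.cast_nonneg k : (0:ℝ) ≤ k)]
        have hzero : (1-ε)*(k:ℝ)/n - (k:ℝ)/n + ε*(k:ℝ)/n = 0 := by
          field_simp
          ring
        linarith [hp, h5, hzero]
      · have hks : k ≤ n - 1 ∨ k = n := by omega
        rcases hks with hks | hks
        · have hp := hsuf k (by omega) hks
          have h1δ : (0:ℝ) < 1 - δ := by linarith
          have h3 : ε*δ/n * ((min k (n-k):ℕ):ℝ) ≤ ε*δ/(1-δ) * ((n:ℝ)-k)/n := by
            rw [div_mul_eq_mul_div, div_mul_eq_mul_div]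
            apply (div_le_div_iff_of_pos_right hn0).2
            rw [le_div_iff₀ h1δ]
            nlinarith [mul_le_mul_of_nonneg_left hminle2 (by positivity : (0:ℝ) ≤ ε*δ),
              mul_nonneg (mul_nonneg (mul_nonneg hε0.le hδ0.le) hmn0) hδ0.le]
          linarith
        · subst hks
          rw [hqsum]
          simp [Nat.sub_self, div_self hn0.ne']
  have hD : ∀ k, k + 1 < n → 2 * Real.sinh (x (k+1)) ≤ 2 * Real.sinh (x k) := by
    intro k hk
    have := hxmono k (k+1) (by omega) hk
    have := Real.sinh_le_sinh.2 this
    linarith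
  have habel := abel_le_zero n a (fun i => 2 * Real.sinh (x i)) hAk hAn hD
  have hsum_split : ∑ i ∈ range n, a i * (2 * Real.sinh (x i))
      = ∑ i ∈ range n, (q i - 1/n) * (2 * Real.sinh (x i))
        + (ε*δ/n) * (2 * ∑ i ∈ range n, wcoef n i * Real.sinh (x i)) := by
    rw [Finset.mul_sum, Finset.mul_sum, ← Finset.sum_add_distrib]
    apply Finset.sum_congr rfl
    intro i _
    show ((q i - 1/n) + (ε*δ/n) * wcoef n i) * (2 * Real.sinh (x i)) = _
    ring
  have hcore := core n x hxmono hxsum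
  have hcosh : ∀ y : ℝ, Real.cosh y ≤ 1 + |Real.sinh y| := by
    intro y
    nlinarith [Real.cosh_sq y, Real.cosh_pos y, abs_nonneg (Real.sinh y),
      sq_abs (Real.sinh y)]
  have hcoshsum : ∑ i ∈ range n, Real.cosh (x i)
      ≤ (n:ℝ) + ∑ i ∈ range n, |Real.sinh (x i)| := by
    calc ∑ i ∈ range n, Real.cosh (x i) ≤ ∑ i ∈ range n, (1 + |Real.sinh (x i)|) :=
          Finset.sum_le_sum (fun i _ => hcosh (x i))
      _ = (n:ℝ) + ∑ i ∈ range n, |Real.sinh (x i)| := by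
          rw [Finset.sum_add_distrib]
          simp
  have hpos : (0:ℝ) < ε*δ/n := by positivity
  -- W ≤ -(εδ/n) * 2 * core-sum
  have hW : ∑ i ∈ range n, (q i - 1/n) * (2 * Real.sinh (x i))
      ≤ -(ε*δ/n) * (2 * (1/4) * ∑ i ∈ range n, |Real.sinh (x i)|) := by
    have h1 : (ε*δ/n) * (2 * ((1/4) * ∑ i ∈ range n, |Real.sinh (x i)|))
        ≤ (ε*δ/n) * (2 * ∑ i ∈ range n, wcoef n i * Real.sinh (x i)) := by
      apply mul_le_mul_of_nonneg_left _ hpos.le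
      linarith [hcore]
    nlinarith [habel, hsum_split]
  have habs0 : 0 ≤ ∑ i ∈ range n, |Real.sinh (x i)| :=
    Finset.sum_nonneg (fun i _ => abs_nonneg _)
  have hfinal : -(ε*δ/n) * (2 * (1/4) * ∑ i ∈ range n, |Real.sinh (x i)|)
      ≤ -(ε*δ/(2*n)) * (∑ i ∈ range n, Real.cosh (x i)) + ε*δ/2 := by
    have he : -(ε*δ/n) * (2 * (1/4) * ∑ i ∈ range n, |Real.sinh (x i)|)
        = -(ε*δ/(2*n)) * (∑ i ∈ range n, |Real.sinh (x i)|) := by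
      field_simp
      ring
    rw [he]
    have h2 : -(ε*δ/(2*n)) * (∑ i ∈ range n, Real.cosh (x i))
        ≥ -(ε*δ/(2*n)) * ((n:ℝ) + ∑ i ∈ range n, |Real.sinh (x i)|) := by
      have hp2 : (0:ℝ) < ε*δ/(2*n) := by positivity
      nlinarith [hcoshsum]
    have h3 : (ε*δ/(2*n)) * (n:ℝ) = ε*δ/2 := by
      field_simp
    nlinarith [h2, h3]
  exact le_trans hW hfinal

/-- Condition `C1` for a probability vector `p` on `n` bins (index `i : Fin n`
corresponds to the bin of rank `i+1`). -/
def CondC1 (n : ℕ) (p : Fin n → ℝ) (δ ε : ℝ) : Prop :=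
  (∀ k : ℕ, 1 ≤ k → (k : ℝ) ≤ δ * n →
    ∑ i ∈ Finset.univ.filter (fun i : Fin n => (i : ℕ) < k), p i ≤ (1 - ε) * k / n) ∧
  (∀ k : ℕ, δ * n + 1 ≤ (k : ℝ) → k ≤ n →
    (1 + ε * δ / (1 - δ)) * ((n : ℝ) - k + 1) / n ≤
      ∑ i ∈ Finset.univ.filter (fun i : Fin n => k ≤ (i : ℕ) + 1), p i)

lemma drift_det (n : ℕ) (hn : 1 ≤ n) (δ ε : ℝ) (hδ0 : 0 < δ) (hδ1 : δ < 1)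
    (hε0 : 0 < ε) (hε1 : ε < 1)
    (m : ℕ) (hm : (m:ℝ) = δ * n)
    (p : Fin n → ℝ) (hp0 : ∀ i, 0 ≤ p i) (hpsum : ∑ i, p i = 1)
    (hC1 : CondC1 n p δ ε)
    (v : Fin n → ℝ) (hvmono : ∀ i j : Fin n, i ≤ j → v j ≤ v i)
    (hvsum : ∑ i, v i = 0)
    (K κ α : ℝ) (hK : 0 < K) (hκ : 0 < κ) (hα : 0 < α) (hKα : K * α ≤ ε * δ / 8) :
    ∑ i, Real.exp (α * v i) * ((p i - 1/(n:ℝ)) * (κ*α) + K*κ*α^2/n)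
      + ∑ i, Real.exp (-(α * v i)) * ((1/(n:ℝ) - p i) * (κ*α) + K*κ*α^2/n)
      ≤ -(ε * δ / 8) * κ * (α/(n:ℝ)) * (∑ i, (Real.exp (α * v i) + Real.exp (-(α * v i))))
        + κ * ε * α := by
  have hn0 : (0:ℝ) < n := by exact_mod_cast hn
  classical
  set q : ℕ → ℝ := fun k => if h : k < n then p ⟨k, h⟩ else 0 with hqdef
  set u : ℕ → ℝ := fun k => if h : k < n then v ⟨k, h⟩ else 0 with hudef
  have hconv : ∀ (g : Fin n → ℝ), ∑ i, g i
      = ∑ k ∈ range n, (if h : k < n then g ⟨k, h⟩ else 0) := by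
    intro g
    rw [← Fin.sum_univ_eq_sum_range (fun k => if h : k < n then g ⟨k, h⟩ else 0) n]
    apply Finset.sum_congr rfl
    intro i _
    rw [dif_pos i.isLt]
  -- prefix sums of q equal filtered Fin sums
  have hprefix : ∀ k, k ≤ n → ∑ j ∈ range k, q j
      = ∑ i ∈ Finset.univ.filter (fun i : Fin n => (i : ℕ) < k), p i := by
    intro k hk
    rw [Finset.sum_filter, hconv (fun i => if (i:ℕ) < k then p i else 0)]
    rw [← Finset.sum_subset (Finset.range_subset_range.2 hk)
      (fun j hj hnj => by
        rw [Finset.mem_range] at hj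
        rw [Finset.mem_range, not_lt] at hnj
        rw [dif_pos hj]
        show (if j < k then p ⟨j, hj⟩ else 0) = 0
        rw [if_neg (by omega)])]
    apply Finset.sum_congr rfl
    intro j hj
    rw [Finset.mem_range] at hj
    have hjn : j < n := by omega
    rw [dif_pos hjn]
    show q j = (if j < k then p ⟨j, hjn⟩ else 0)
    rw [if_pos hj, hqdef]
    simp only []
    rw [dif_pos hjn]
  have hqsum : ∑ j ∈ range n, q j = 1 := by
    rw [hconv p] at hpsum
    exact hpsum
  have hpre : ∀ k, 1 ≤ k → k ≤ m → ∑ j ∈ range k, q j ≤ (1-ε) * k / n := by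
    intro k hk1 hkm
    have hkn : k ≤ n := by
      by_contra hc
      push_neg at hc
      have h1 : (n:ℝ) < (k:ℝ) := by exact_mod_cast hc
      have h2 : (k:ℝ) ≤ (m:ℝ) := by exact_mod_cast hkm
      nlinarith
    rw [hprefix k hkn]
    apply hC1.1 k hk1
    have h2 : (k:ℝ) ≤ (m:ℝ) := by exact_mod_cast hkm
    rw [hm] at h2
    exact h2
  have hsuf : ∀ k, m ≤ k → k ≤ n - 1 →
      ∑ j ∈ range k, q j ≤ (k:ℝ)/n - (ε*δ/(1-δ)) * ((n:ℝ)-k)/n := by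
    intro k hmk hkn1
    have hm1 : 1 ≤ m := by
      rcases Nat.eq_zero_or_pos m with h0 | h
      · exfalso
        rw [h0] at hm
        simp only [Nat.cast_zero] at hm
        nlinarith
      · exact h
    have hkn : k < n := by omega
    have hC2 := hC1.2 (k+1) (by
        push_cast
        rw [← hm]
        have : (m:ℝ) ≤ (k:ℝ) := by exact_mod_cast hmk
        linarith) (by omega)
    -- rewrite filter predicate
    have hfeq : Finset.univ.filter (fun i : Fin n => k+1 ≤ (i : ℕ) + 1)
        = Finset.univ.filter (fun i : Fin n => ¬ ((i : ℕ) < k)) := by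
      apply Finset.filter_congr
      intro i _
      constructor <;> intro hh <;> omega
    rw [hfeq] at hC2
    have hpart := Finset.sum_filter_add_sum_filter_not Finset.univ
      (fun i : Fin n => (i : ℕ) < k) p
    rw [hpsum] at hpart
    rw [hprefix k hkn.le]
    have hcast : ((k+1:ℕ):ℝ) = (k:ℝ) + 1 := by push_cast; ring
    rw [hcast] at hC2
    have h1δ : (1:ℝ) - δ ≠ 0 := by linarith
    have hnne : (n:ℝ) ≠ 0 := hn0.ne'
    have hexpand : (1 + ε * δ / (1 - δ)) * ((n : ℝ) - ((k:ℝ)+1) + 1) / n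
        = ((n:ℝ) - k)/n + (ε*δ/(1-δ)) * ((n:ℝ)-k)/n := by
      field_simp
      ring
    rw [hexpand] at hC2
    have hfin : ((n:ℝ) - k)/n = 1 - (k:ℝ)/n := by
      field_simp
    rw [hfin] at hC2
    linarith
  have humono : ∀ i j, i ≤ j → j < n → u j ≤ u i := by
    intro i j hij hj
    have hi : i < n := by omega
    show (if h : j < n then v ⟨j, h⟩ else 0) ≤ (if h : i < n then v ⟨i, h⟩ else 0)
    rw [dif_pos hj, dif_pos hi]
    exact hvmono ⟨i, hi⟩ ⟨j, hj⟩ hij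
  have husum : ∑ j ∈ range n, u j = 0 := by
    rw [← hconv v]
    exact hvsum
  have hkey := key_range n δ ε hδ0 hδ1 hε0 hε1 m hm hn q hqsum hpre hsuf u humono husum α hα
  -- convert the goal to range sums
  have hlhs : ∑ i, Real.exp (α * v i) * ((p i - 1/(n:ℝ)) * (κ*α) + K*κ*α^2/n)
      + ∑ i, Real.exp (-(α * v i)) * ((1/(n:ℝ) - p i) * (κ*α) + K*κ*α^2/n)
      = κ*α * (∑ j ∈ range n, (q j - 1/(n:ℝ)) * (2 * Real.sinh (α * u j)))
        + (K*κ*α^2/n) * (2 * ∑ j ∈ range n, Real.cosh (α * u j)) := by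
    rw [hconv (fun i => Real.exp (α * v i) * ((p i - 1/(n:ℝ)) * (κ*α) + K*κ*α^2/n)),
      hconv (fun i => Real.exp (-(α * v i)) * ((1/(n:ℝ) - p i) * (κ*α) + K*κ*α^2/n))]
    rw [Finset.mul_sum, Finset.mul_sum, Finset.mul_sum, ← Finset.sum_add_distrib,
      ← Finset.sum_add_distrib]
    apply Finset.sum_congr rfl
    intro j hj
    rw [Finset.mem_range] at hj
    rw [dif_pos hj, dif_pos hj]
    show Real.exp (α * v ⟨j, hj⟩) * ((p ⟨j, hj⟩ - 1/(n:ℝ)) * (κ*α) + K*κ*α^2/n)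
        + Real.exp (-(α * v ⟨j, hj⟩)) * ((1/(n:ℝ) - p ⟨j, hj⟩) * (κ*α) + K*κ*α^2/n)
      = κ*α*((q j - 1/(n:ℝ)) * (2 * Real.sinh (α * u j)))
        + K*κ*α^2/n * (2 * Real.cosh (α * u j))
    rw [hqdef, hudef]
    simp only []
    rw [dif_pos hj, dif_pos hj, Real.sinh_eq, Real.cosh_eq]
    ring
  have hrhs : ∑ i, (Real.exp (α * v i) + Real.exp (-(α * v i)))
      = 2 * ∑ j ∈ range n, Real.cosh (α * u j) := by
    rw [hconv (fun i => Real.exp (α * v i) + Real.exp (-(α * v i))), Finset.mul_sum]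
    apply Finset.sum_congr rfl
    intro j hj
    rw [Finset.mem_range] at hj
    rw [dif_pos hj]
    show Real.exp (α * v ⟨j, hj⟩) + Real.exp (-(α * v ⟨j, hj⟩)) = 2 * Real.cosh (α * u j)
    rw [hudef]
    simp only []
    rw [dif_pos hj, Real.cosh_eq]
    ring
  rw [hlhs, hrhs]
  set C := ∑ j ∈ range n, Real.cosh (α * u j) with hCdef
  set W := ∑ j ∈ range n, (q j - 1/(n:ℝ)) * (2 * Real.sinh (α * u j)) with hWdef
  have hC0 : 0 ≤ C :=
    Finset.sum_nonneg (fun j _ => (Real.cosh_pos (x := α * u j)).le)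
  have hW2 : κ*α*W ≤ κ*α*(-(ε*δ/(2*n)) * C + ε*δ/2) :=
    mul_le_mul_of_nonneg_left hkey (by positivity)
  have hK2 : (K*κ*α^2/n) * (2*C) ≤ (ε*δ/8) * (κ*α/n) * (2*C) := by
    have h2 : (0:ℝ) ≤ 2*C := by linarith
    have h3 : K*κ*α^2/(n:ℝ)*(2*C) = (K*α) * ((κ*α/n)*(2*C)) := by ring
    have h4 : ε*δ/8*(κ*α/(n:ℝ))*(2*C) = (ε*δ/8) * ((κ*α/n)*(2*C)) := by ring
    rw [h3, h4]
    exact mul_le_mul_of_nonneg_right hKα (mul_nonneg (by positivity) h2)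
  have hslack : κ*α*(ε*δ/2) ≤ κ*ε*α := by
    have h2 : 0 < κ*α*ε := by positivity
    nlinarith [h2]
  have hnne : (n:ℝ) ≠ 0 := hn0.ne'
  have heq : κ*α*(-(ε*δ/(2*(n:ℝ))) * C + ε*δ/2) + (ε*δ/8)*(κ*α/(n:ℝ))*(2*C)
      = -(ε*δ/8)*κ*(α/(n:ℝ))*(2*C) + κ*α*(ε*δ/2) := by
    field_simp
    ring
  linarith [hW2, hK2, hslack, heq]

/-- **Expected drop of the hyperbolic cosine potential.** For every constant `δ ∈ (0,1)`
there is `c = c(δ) > 0` such that: for every probability space with filtration `ℱ`,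
adapted zero-sum non-increasing load vectors `(y^t)` with `y^0 = 0`, probability vector
`p` satisfying `C1(δ,ε)`, `K, κ > 0` and `0 < α < min(1, εδ/(8K))`, if the per-bin
potentials `Φ_i^t = e^{α y_i^t}` and `Ψ_i^t = e^{-α y_i^t}` satisfy the stated
conditional-expectation drop inequalities, then
`E[Γ^{t+1} - Γ^t | ℱ^t] ≤ -(εδ/8)·κ·(α/n)·Γ^t + c·κ·ε·α` a.s. and
`E[Γ^t] ≤ (8c/δ)·n` for all `t`. -/
theorem stmt_1 (δ : ℝ) (hδ0 : 0 < δ) (hδ1 : δ < 1) :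
    ∃ c : ℝ, 0 < c ∧
      ∀ (Ω : Type) (m0 : MeasurableSpace Ω) (μ : Measure Ω), IsProbabilityMeasure μ →
      ∀ ℱ : Filtration ℕ m0,
      ∀ n : ℕ, 1 ≤ n → (∃ dn : ℕ, (dn : ℝ) = δ * n) →
      ∀ y : ℕ → Fin n → Ω → ℝ,
        (∀ t i, StronglyMeasurable[ℱ t] (y t i)) →
        (∀ t ω, ∀ i j : Fin n, i ≤ j → y t j ω ≤ y t i ω) →
        (∀ t ω, ∑ i, y t i ω = 0) →
        (∀ i ω, y 0 i ω = 0) →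
      ∀ ε : ℝ, 0 < ε → ε < 1 →
      ∀ p : Fin n → ℝ, (∀ i, 0 ≤ p i) → ∑ i, p i = 1 → CondC1 n p δ ε →
      ∀ K κ α : ℝ, 0 < K → 0 < κ → 0 < α → α < min 1 (ε * δ / (8 * K)) →
        (∀ t i, Integrable (fun ω => Real.exp (α * y t i ω)) μ) →
        (∀ t i, Integrable (fun ω => Real.exp (-(α * y t i ω))) μ) →
        (∀ t : ℕ, ∀ᵐ ω ∂μ,
          ∑ i, (μ[fun ω' => Real.exp (α * y (t + 1) i ω') - Real.exp (α * y t i ω')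
              | ℱ t]) ω ≤
            ∑ i, Real.exp (α * y t i ω) *
              ((p i - 1 / n) * (κ * α) + K * κ * α ^ 2 / n)) →
        (∀ t : ℕ, ∀ᵐ ω ∂μ,
          ∑ i, (μ[fun ω' => Real.exp (-(α * y (t + 1) i ω')) -
                Real.exp (-(α * y t i ω')) | ℱ t]) ω ≤
            ∑ i, Real.exp (-(α * y t i ω)) *
              ((1 / n - p i) * (κ * α) + K * κ * α ^ 2 / n)) →
        ∀ t : ℕ,
          (∀ᵐ ω ∂μ,
            (μ[fun ω' =>
                (∑ i, (Real.exp (α * y (t + 1) i ω') + Real.exp (-(α * y (t + 1) i ω')))) -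
                  (∑ i, (Real.exp (α * y t i ω') + Real.exp (-(α * y t i ω'))))
              | ℱ t]) ω ≤
              -(ε * δ / 8) * κ * (α / n) *
                  (∑ i, (Real.exp (α * y t i ω) + Real.exp (-(α * y t i ω)))) +
                c * κ * ε * α) ∧
          (∫ ω, (∑ i, (Real.exp (α * y t i ω) + Real.exp (-(α * y t i ω)))) ∂μ ≤
            8 * c / δ * n) := by
  refine ⟨2, by norm_num, ?_⟩
  intro Ω m0 μ hμ ℱ n hn hdn y hmeas hymono hysum hy0 ε hε0 hε1 p hp0 hpsum hC1
    K κ α hK hκ hα hαmin hint himt hΦ hΨ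
  obtain ⟨m, hm⟩ := hdn
  have hn0 : (0:ℝ) < n := by exact_mod_cast hn
  have hKα : K * α ≤ ε * δ / 8 := by
    have h1 : α ≤ ε * δ / (8 * K) := (lt_of_lt_of_le hαmin (min_le_right _ _)).le
    have h2 : K * α ≤ K * (ε * δ / (8 * K)) := mul_le_mul_of_nonneg_left h1 hK.le
    have h3 : K * (ε * δ / (8 * K)) = ε * δ / 8 := by field_simp
    linarith
  -- notation
  set Γf : ℕ → Ω → ℝ :=
    fun t ω => ∑ i, (Real.exp (α * y t i ω) + Real.exp (-(α * y t i ω))) with hΓdef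
  have hΓint : ∀ t, Integrable (Γf t) μ := by
    intro t
    apply integrable_finset_sum
    intro i _
    exact (hint t i).add (himt t i)
  have hΓ2n : ∀ t ω, 2 * (n:ℝ) ≤ Γf t ω := by
    intro t ω
    have h1 : ∀ i : Fin n, (2:ℝ) ≤ Real.exp (α * y t i ω) + Real.exp (-(α * y t i ω)) := by
      intro i
      have := Real.one_le_cosh (α * y t i ω)
      rw [Real.cosh_eq] at this
      linarith
    calc 2 * (n:ℝ) = ∑ _i : Fin n, (2:ℝ) := by
          rw [Finset.sum_const, Finset.card_univ, Fintype.card_fin, nsmul_eq_mul]; ring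
      _ ≤ Γf t ω := Finset.sum_le_sum (fun i _ => h1 i)
  -- the drift inequality with constant 1
  have hdrift : ∀ t : ℕ, ∀ᵐ ω ∂μ,
      (μ[fun ω' => Γf (t+1) ω' - Γf t ω' | ℱ t]) ω ≤
        -(ε * δ / 8) * κ * (α / n) * Γf t ω + κ * ε * α := by
    intro t
    set Φd : Fin n → Ω → ℝ :=
      fun i ω' => Real.exp (α * y (t + 1) i ω') - Real.exp (α * y t i ω') with hΦddef
    set Ψd : Fin n → Ω → ℝ :=
      fun i ω' => Real.exp (-(α * y (t + 1) i ω')) - Real.exp (-(α * y t i ω')) with hΨddef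
    have hPhiInt : ∀ i, Integrable (Φd i) μ := fun i => (hint (t+1) i).sub (hint t i)
    have hPsiInt : ∀ i, Integrable (Ψd i) μ := fun i => (himt (t+1) i).sub (himt t i)
    have e0 : (fun ω' => Γf (t+1) ω' - Γf t ω')
        = ∑ i : Fin n, (Φd i + Ψd i) := by
      funext ω'
      rw [Finset.sum_apply]
      show Γf (t+1) ω' - Γf t ω' = ∑ i : Fin n, (Φd i + Ψd i) ω'
      rw [hΓdef]
      simp only [Pi.add_apply]
      rw [← Finset.sum_sub_distrib]
      apply Finset.sum_congr rfl
      intro i _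
      show _ = Φd i ω' + Ψd i ω'
      rw [hΦddef, hΨddef]
      ring
    have e1 : μ[∑ i : Fin n, (Φd i + Ψd i) | ℱ t]
        =ᵐ[μ] ∑ i : Fin n, μ[Φd i + Ψd i | ℱ t] :=
      condExp_finset_sum (fun i _ => (hPhiInt i).add (hPsiInt i)) (ℱ t)
    have e2 : ∀ᵐ ω ∂μ, ∀ i : Fin n,
        (μ[Φd i + Ψd i | ℱ t]) ω = (μ[Φd i | ℱ t]) ω + (μ[Ψd i | ℱ t]) ω := by
      rw [ae_all_iff]
      intro i
      filter_upwards [condExp_add (hPhiInt i) (hPsiInt i) (m := ℱ t)] with ω hω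
      rw [hω, Pi.add_apply]
    filter_upwards [hΦ t, hΨ t, e1, e2] with ω h1 h2 h3 h4
    have heq : (μ[fun ω' => Γf (t+1) ω' - Γf t ω' | ℱ t]) ω
        = ∑ i : Fin n, (μ[Φd i | ℱ t]) ω + ∑ i : Fin n, (μ[Ψd i | ℱ t]) ω := by
      calc (μ[fun ω' => Γf (t+1) ω' - Γf t ω' | ℱ t]) ω
          = (μ[∑ i : Fin n, (Φd i + Ψd i) | ℱ t]) ω := by rw [e0]
        _ = (∑ i : Fin n, μ[Φd i + Ψd i | ℱ t]) ω := h3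
        _ = ∑ i : Fin n, (μ[Φd i + Ψd i | ℱ t]) ω := Finset.sum_apply _ _ _
        _ = ∑ i : Fin n, ((μ[Φd i | ℱ t]) ω + (μ[Ψd i | ℱ t]) ω) :=
            Finset.sum_congr rfl (fun i _ => h4 i)
        _ = _ := Finset.sum_add_distrib
    rw [heq]
    have hdet := drift_det n hn δ ε hδ0 hδ1 hε0 hε1 m hm p hp0 hpsum hC1
      (fun i => y t i ω) (fun i j hij => hymono t ω i j hij) (hysum t ω)
      K κ α hK hκ hα hKα
    exact le_trans (add_le_add h1 h2) hdet
  -- weaker drift with c = 2 for the statement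
  have hκεα : 0 < κ * ε * α := by positivity
  intro t
  constructor
  · filter_upwards [hdrift t] with ω hω
    calc (μ[fun ω' => Γf (t+1) ω' - Γf t ω' | ℱ t]) ω
        ≤ -(ε * δ / 8) * κ * (α / n) * Γf t ω + κ * ε * α := hω
      _ ≤ -(ε * δ / 8) * κ * (α / n) * Γf t ω + 2 * κ * ε * α := by linarith
  -- expectation bound
  · have hrec : ∀ s : ℕ, ∫ ω, Γf (s+1) ω ∂μ
        ≤ ∫ ω, Γf s ω ∂μ - (ε * δ / 8) * κ * (α / n) * ∫ ω, Γf s ω ∂μ + κ * ε * α := by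
      intro s
      have hsubint : Integrable (fun ω => Γf (s+1) ω - Γf s ω) μ :=
        (hΓint (s+1)).sub (hΓint s)
      have hRHSint : Integrable
          (fun ω => -(ε * δ / 8) * κ * (α / n) * Γf s ω + κ * ε * α) μ :=
        ((hΓint s).const_mul _).add (integrable_const _)
      have h5 : ∫ ω, (μ[fun ω' => Γf (s+1) ω' - Γf s ω' | ℱ s]) ω ∂μ
          = ∫ ω, (Γf (s+1) ω - Γf s ω) ∂μ := integral_condExp (ℱ.le s)
      have h6 : ∫ ω, (μ[fun ω' => Γf (s+1) ω' - Γf s ω' | ℱ s]) ω ∂μ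
          ≤ ∫ ω, (-(ε * δ / 8) * κ * (α / n) * Γf s ω + κ * ε * α) ∂μ :=
        integral_mono_ae integrable_condExp hRHSint (hdrift s)
      rw [h5, integral_sub (hΓint (s+1)) (hΓint s)] at h6
      rw [integral_add ((hΓint s).const_mul _) (integrable_const _),
        integral_const_mul, integral_const] at h6
      simp only [probReal_univ, smul_eq_mul, one_mul] at h6
      linarith
    have hlb : ∀ s : ℕ, 2 * (n:ℝ) ≤ ∫ ω, Γf s ω ∂μ := by
      intro s
      have := integral_mono (integrable_const (2 * (n:ℝ))) (hΓint s) (fun ω => hΓ2n s ω)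
      rwa [integral_const, probReal_univ, one_smul] at this
    have hm0 : ∫ ω, Γf 0 ω ∂μ = 2 * (n:ℝ) := by
      have hΓ0 : (fun ω => Γf 0 ω) = fun _ => 2 * (n:ℝ) := by
        funext ω
        rw [hΓdef]
        simp only [hy0, mul_zero, Real.exp_zero, neg_zero]
        rw [Finset.sum_const, Finset.card_univ, Fintype.card_fin, nsmul_eq_mul]
        norm_num
        ring
      rw [hΓ0, integral_const, probReal_univ, one_smul]
    set β := (ε * δ / 8) * κ * (α / (n:ℝ)) with hβdef
    set B := 8 * (n:ℝ) / δ with hBdef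
    have hβpos : 0 < β := by positivity
    have hB0 : 0 < B := by positivity
    have hBβ : B * β = κ * ε * α := by
      rw [hβdef, hBdef]
      field_simp
    have h2nB : 2 * (n:ℝ) ≤ B := by
      rw [hBdef, le_div_iff₀ hδ0]
      nlinarith [hn0]
    have hmain : ∫ ω, Γf t ω ∂μ ≤ 2 * B := by
      rcases le_or_gt β 1 with hβ1 | hβ1
      · have hind : ∀ s, ∫ ω, Γf s ω ∂μ ≤ B := by
          intro s
          induction s with
          | zero => rw [hm0]; linarith
          | succ u ih =>
            have h7 := hrec u
            nlinarith [hβpos, hlb u]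
        linarith [hind t, hB0]
      · rcases le_or_gt 2 β with hβ2 | hβ2
        · have h7 := hrec t
          have h8 := hlb (t+1)
          by_contra hX
          push_neg at hX
          have h9 : (β - 1) * (∫ ω, Γf t ω ∂μ) > (β - 1) * (2 * B) :=
            mul_lt_mul_of_pos_left hX (by linarith)
          have h10 : 0 ≤ B * (β - 2) := mul_nonneg hB0.le (by linarith)
          nlinarith [h7, h8, hBβ]
        · cases t with
          | zero => rw [hm0]; linarith
          | succ u =>
            have h7 := hrec u
            have h8 := hlb u
            have h9 : 0 ≤ (β - 1) * ((∫ ω, Γf u ω ∂μ) - 2 * n) :=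
              mul_nonneg (by linarith) (by linarith)
            nlinarith [hBβ, hn0]
    calc ∫ ω, Γf t ω ∂μ ≤ 2 * B := hmain
      _ = 8 * 2 / δ * n := by rw [hBdef]; field_simp
end

section
/- Let W be a nonnegative random variable with E[W] = 1 and E[e^{λW}] < ∞ for some constant λ > 0. Then there exists a constant S := S(λ) ≥ max(1, 1/λ) such that for every α ∈ (0, min(λ/2, 1)) and every κ ∈ [−1, 1], E[e^{α·κ·W}] ≤ 1 + α·κ + S·α²·κ². -/
open MeasureTheory Real

lemma exp_le_quad (x : ℝ) : Real.exp x ≤ 1 + x + x ^ 2 * Real.exp |x| := by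
  rcases le_or_gt 0 x with hx | hx
  · rw [abs_of_nonneg hx]
    have h1 : 1 - x ≤ Real.exp (-x) := Real.one_sub_le_exp_neg x
    have h3 : 0 < Real.exp x := Real.exp_pos x
    have h4 : (1 - x) * Real.exp x ≤ 1 := by
      calc (1 - x) * Real.exp x ≤ Real.exp (-x) * Real.exp x :=
        mul_le_mul_of_nonneg_right h1 h3.le
      _ = 1 := by rw [← Real.exp_add]; simp
    nlinarith [mul_nonneg hx h3.le, mul_nonneg (mul_nonneg hx hx) h3.le]
  · rw [abs_of_neg hx]
    set y := -x with hy
    have hy0 : 0 ≤ y := by simp only [hy]; linarith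
    have hq : 1 + y + y ^ 2 / 2 ≤ Real.exp y := Real.quadratic_le_exp_of_nonneg hy0
    have hE : 0 < Real.exp y := Real.exp_pos y
    have hx' : x = -y := by simp [hy]
    rw [hx', Real.exp_neg, inv_eq_one_div, div_le_iff₀ hE]
    have key : 1 ≤ (1 - y) * Real.exp y + y ^ 2 * Real.exp y * Real.exp y := by
      rcases le_or_gt y 1 with h1 | h1
      · nlinarith [sq_nonneg y, mul_nonneg hy0 hE.le, sq_nonneg (Real.exp y - 1)]
      · nlinarith [sq_nonneg y, mul_nonneg hy0 hE.le, sq_nonneg (Real.exp y - 1)]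
    nlinarith [key]

/-- If `W ≥ 0` has `E[W] = 1` and `E[e^{λW}] < ∞` for some `λ > 0`, then there is a
constant `S ≥ max(1, 1/λ)` such that for every `α ∈ (0, min(λ/2, 1))` and `κ ∈ [-1, 1]`,
`E[e^{ακW}] ≤ 1 + ακ + Sα²κ²`. -/
theorem stmt_2 {Ω : Type*} [MeasurableSpace Ω] (μ : Measure Ω) [IsProbabilityMeasure μ]
    (W : Ω → ℝ) (hWnn : ∀ ω, 0 ≤ W ω) (hWmeas : Measurable W)
    (hmean : ∫ ω, W ω ∂μ = 1)
    (lam : ℝ) (hlam : 0 < lam)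
    (hfin : ∫⁻ ω, ENNReal.ofReal (Real.exp (lam * W ω)) ∂μ < ⊤) :
    ∃ S : ℝ, max 1 (1 / lam) ≤ S ∧
      ∀ α κ : ℝ, 0 < α → α < min (lam / 2) 1 → -1 ≤ κ → κ ≤ 1 →
        ∫⁻ ω, ENNReal.ofReal (Real.exp (α * κ * W ω)) ∂μ ≤
          ENNReal.ofReal (1 + α * κ + S * α ^ 2 * κ ^ 2) := by
  have hmeasE : Measurable fun ω => Real.exp (lam * W ω) := (measurable_const.mul hWmeas).exp
  have hintE : Integrable (fun ω => Real.exp (lam * W ω)) μ := by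
    refine ⟨hmeasE.aestronglyMeasurable, ?_⟩
    rw [hasFiniteIntegral_iff_ofReal (ae_of_all _ fun ω => (Real.exp_pos _).le)]
    exact hfin
  have hintW : Integrable W μ := by
    refine (hintE.const_mul (1 / lam)).mono' hWmeas.aestronglyMeasurable
      (ae_of_all _ fun ω => ?_)
    rw [Real.norm_of_nonneg (hWnn ω)]
    have h1 : lam * W ω ≤ Real.exp (lam * W ω) := by
      linarith [Real.add_one_le_exp (lam * W ω)]
    rw [div_mul_eq_mul_div, one_mul, le_div_iff₀ hlam]
    linarith
  set M : ℝ := ∫ ω, Real.exp (lam * W ω) ∂μ with hM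
  have hM0 : 0 ≤ M := integral_nonneg fun ω => (Real.exp_pos _).le
  refine ⟨max (max 1 (1 / lam)) (8 / lam ^ 2 * M), le_max_left _ _, ?_⟩
  set S := max (max 1 (1 / lam)) (8 / lam ^ 2 * M) with hS
  intro α κ hα0 hαmin hκ1 hκ2
  have hα2 : α < lam / 2 := lt_of_lt_of_le hαmin (min_le_left _ _)
  -- pointwise bound
  have hpt : ∀ ω, Real.exp (α * κ * W ω) ≤
      1 + α * κ * W ω + 8 / lam ^ 2 * α ^ 2 * κ ^ 2 * Real.exp (lam * W ω) := by
    intro ω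
    have hW := hWnn ω
    have h1 := exp_le_quad (α * κ * W ω)
    have habs : |α * κ * W ω| ≤ lam / 2 * W ω := by
      rw [abs_mul, abs_mul, abs_of_nonneg hW, abs_of_pos hα0]
      have hκa : |κ| ≤ 1 := abs_le.mpr ⟨hκ1, hκ2⟩
      have h5 : α * |κ| ≤ lam / 2 := by nlinarith [abs_nonneg κ]
      exact mul_le_mul_of_nonneg_right h5 hW
    have hexpabs : Real.exp |α * κ * W ω| ≤ Real.exp (lam / 2 * W ω) :=
      Real.exp_le_exp.mpr habs
    have hWsq : (W ω) ^ 2 ≤ 8 / lam ^ 2 * Real.exp (lam / 2 * W ω) := by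
      have h2 : 1 + lam / 2 * W ω + (lam / 2 * W ω) ^ 2 / 2 ≤ Real.exp (lam / 2 * W ω) :=
        Real.quadratic_le_exp_of_nonneg (by positivity)
      have hl2 : 0 < lam ^ 2 := by positivity
      rw [div_mul_eq_mul_div, le_div_iff₀ hl2]
      nlinarith [mul_nonneg (mul_nonneg hlam.le hW) (mul_nonneg hlam.le hW),
        mul_nonneg hlam.le hW]
    have hexp2 : Real.exp (lam / 2 * W ω) * Real.exp (lam / 2 * W ω) =
        Real.exp (lam * W ω) := by
      rw [← Real.exp_add]; ring_nf
    have hE2 : 0 < Real.exp (lam / 2 * W ω) := Real.exp_pos _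
    have hE3 : 0 < Real.exp |α * κ * W ω| := Real.exp_pos _
    have hx2 : (α * κ * W ω) ^ 2 = α ^ 2 * κ ^ 2 * (W ω) ^ 2 := by ring
    calc Real.exp (α * κ * W ω) ≤ 1 + α * κ * W ω + (α * κ * W ω) ^ 2 *
          Real.exp |α * κ * W ω| := h1
      _ ≤ 1 + α * κ * W ω + 8 / lam ^ 2 * α ^ 2 * κ ^ 2 * Real.exp (lam * W ω) := by
        have h3 : (α * κ * W ω) ^ 2 * Real.exp |α * κ * W ω| ≤
            α ^ 2 * κ ^ 2 * (W ω) ^ 2 * Real.exp (lam / 2 * W ω) := by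
          rw [hx2]
          exact mul_le_mul_of_nonneg_left hexpabs (by positivity)
        have h4 : α ^ 2 * κ ^ 2 * (W ω) ^ 2 * Real.exp (lam / 2 * W ω) ≤
            α ^ 2 * κ ^ 2 * (8 / lam ^ 2 * Real.exp (lam / 2 * W ω)) *
              Real.exp (lam / 2 * W ω) := by
          have := mul_le_mul_of_nonneg_right
            (mul_le_mul_of_nonneg_left hWsq (by positivity : (0:ℝ) ≤ α ^ 2 * κ ^ 2)) hE2.le
          linarith
        have h5 : α ^ 2 * κ ^ 2 * (8 / lam ^ 2 * Real.exp (lam / 2 * W ω)) *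
            Real.exp (lam / 2 * W ω) = 8 / lam ^ 2 * α ^ 2 * κ ^ 2 *
            Real.exp (lam * W ω) := by
          rw [← hexp2]; ring
        linarith
  -- integrability of exp(ακW)
  have hptE : ∀ ω, α * κ * W ω ≤ lam * W ω := by
    intro ω
    have hακ : α * κ ≤ lam := by nlinarith
    exact mul_le_mul_of_nonneg_right hακ (hWnn ω)
  have hintf : Integrable (fun ω => Real.exp (α * κ * W ω)) μ := by
    refine hintE.mono' ((measurable_const.mul hWmeas).exp).aestronglyMeasurable
      (ae_of_all _ fun ω => ?_)
    rw [Real.norm_of_nonneg (Real.exp_pos _).le]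
    exact Real.exp_le_exp.mpr (hptE ω)
  have hintg : Integrable
      (fun ω => 1 + α * κ * W ω + 8 / lam ^ 2 * α ^ 2 * κ ^ 2 * Real.exp (lam * W ω)) μ := by
    exact ((integrable_const 1).add (hintW.const_mul (α * κ))).add
      (hintE.const_mul (8 / lam ^ 2 * α ^ 2 * κ ^ 2))
  rw [← ofReal_integral_eq_lintegral_ofReal hintf
    (ae_of_all _ fun ω => (Real.exp_pos _).le)]
  apply ENNReal.ofReal_le_ofReal
  have hle : ∫ ω, Real.exp (α * κ * W ω) ∂μ ≤
      ∫ ω, (1 + α * κ * W ω + 8 / lam ^ 2 * α ^ 2 * κ ^ 2 * Real.exp (lam * W ω)) ∂μ :=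
    integral_mono hintf hintg hpt
  have heq : ∫ ω, (1 + α * κ * W ω + 8 / lam ^ 2 * α ^ 2 * κ ^ 2 *
      Real.exp (lam * W ω)) ∂μ = 1 + α * κ + 8 / lam ^ 2 * α ^ 2 * κ ^ 2 * M := by
    have e1 : ∫ ω, (1 + α * κ * W ω + 8 / lam ^ 2 * α ^ 2 * κ ^ 2 *
        Real.exp (lam * W ω)) ∂μ = (∫ ω, (1 + α * κ * W ω) ∂μ) +
        ∫ ω, 8 / lam ^ 2 * α ^ 2 * κ ^ 2 * Real.exp (lam * W ω) ∂μ :=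
      integral_add ((integrable_const 1).add (hintW.const_mul (α * κ)))
        (hintE.const_mul (8 / lam ^ 2 * α ^ 2 * κ ^ 2))
    have e2 : ∫ ω, (1 + α * κ * W ω) ∂μ = (∫ (_ : Ω), (1:ℝ) ∂μ) + ∫ ω, α * κ * W ω ∂μ :=
      integral_add (integrable_const 1) (hintW.const_mul (α * κ))
    have e3 : ∫ ω, α * κ * W ω ∂μ = α * κ := by
      rw [integral_const_mul _ _, hmean, mul_one]
    have e4 : ∫ ω, 8 / lam ^ 2 * α ^ 2 * κ ^ 2 * Real.exp (lam * W ω) ∂μ =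
        8 / lam ^ 2 * α ^ 2 * κ ^ 2 * M := by
      rw [integral_const_mul _ _]
    rw [e1, e2, e3, e4, integral_const]
    simp
  have hfinal : 8 / lam ^ 2 * α ^ 2 * κ ^ 2 * M ≤ S * α ^ 2 * κ ^ 2 := by
    have hSM : 8 / lam ^ 2 * M ≤ S := le_max_right _ _
    have hk2 : (0:ℝ) ≤ α ^ 2 * κ ^ 2 := by positivity
    nlinarith
  linarith [hle, heq.le, heq.ge]
end

section
/- Let n ≥ 1, b ≥ n, C > 1, S ≥ 1 and 0 < α ≤ n/(2CSb). Let 0 ≤ p ≤ C/n, and let (Z_j)_{j=1}^b and (w_j)_{j=1}^b be mutually independent random variables, where each Z_j is Bernoulli with success probability p and each w_j is drawn from a weight distribution W on [0,∞) satisfying E[e^{α·κ·W}] ≤ 1 + α·κ + S·α²·κ² for all κ ∈ [−1,1]. Set X := Σ_{j=1}^b w_j·(Z_j − 1/n). Then E[e^{αX}] ≤ 1 + (p − 1/n)·α·b + 5·C²·S²·(b/n)·(α²/n)·b, and E[e^{−αX}] ≤ 1 + (1/n − p)·α·b + 5·C²·S²·(b/n)·(α²/n)·b. -/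
open MeasureTheory ProbabilityTheory Real
open scoped ENNReal

lemma exp_cubic_bound {u : ℝ} (hu : |u| ≤ 1) : Real.exp u ≤ 1 + u + (13/18) * u^2 := by
  have h := Real.exp_bound hu (n := 3) (by norm_num)
  have h2 : |u|^3 * (((3:ℕ).succ : ℝ) / (((3:ℕ).factorial : ℝ) * ((3:ℕ) : ℝ))) = |u|^3 * (2/9) := by
    norm_num [Nat.factorial]
  rw [h2] at h
  have hsum : ∑ m ∈ Finset.range 3, u ^ m / m.factorial = 1 + u + u^2/2 := by
    simp [Finset.sum_range_succ, Nat.factorial]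
  rw [hsum] at h
  have h3 : |u|^3 ≤ u^2 := by
    have : |u|^3 = |u| * u^2 := by rw [pow_succ, pow_two, ← sq_abs]; ring
    rw [this]
    nlinarith [sq_nonneg u, abs_nonneg u]
  have := abs_le.mp h
  nlinarith

lemma poly_key {C S : ℝ} (hC : 1 < C) (hS : 1 ≤ S) :
    18*S*(C+1) + 13*(C+1)^2 ≤ 90*C^2*S^2 := by
  have h10 : 0 ≤ 10*C^2 - C - 1 := by nlinarith
  nlinarith [sq_nonneg ((S-1)*C), sq_nonneg (C-1), sq_nonneg (S-1),
    mul_nonneg (sub_nonneg.mpr hS) h10, hC.le, hS]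

lemma sq_one_sub_le {x : ℝ} (h0 : 0 ≤ x) (h1 : x ≤ 1) : (1-x)^2 ≤ 1 := by nlinarith

lemma sq_le_self' {x : ℝ} (h0 : 0 ≤ x) (h1 : x ≤ 1) : x^2 ≤ x := by nlinarith

set_option maxHeartbeats 1000000 in
lemma arith_main (n b : ℕ) (C S α p ε : ℝ) (hn : 1 ≤ n) (hnb : n ≤ b)
    (hC : 1 < C) (hS : 1 ≤ S)
    (hα0 : 0 < α) (hα : α ≤ n / (2*C*S*b)) (hp0 : 0 ≤ p) (hp1 : p ≤ 1)
    (hpC : p ≤ C/n) (hE : ε^2 = 1) :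
    (p * (1 + α*(ε*(1-1/(n:ℝ))) + S*α^2*(ε*(1-1/(n:ℝ)))^2)
      + (1-p) * (1 + α*(-(ε/(n:ℝ))) + S*α^2*(-(ε/(n:ℝ)))^2))^b
    ≤ 1 + ε*(p - 1/(n:ℝ))*α*(b:ℝ) + 5*C^2*S^2*((b:ℝ)/(n:ℝ))*(α^2/(n:ℝ))*(b:ℝ) := by
  have hN : (1:ℝ) ≤ (n:ℝ) := by exact_mod_cast hn
  have hNB : (n:ℝ) ≤ (b:ℝ) := by exact_mod_cast hnb
  have hN0 : (0:ℝ) < n := by linarith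
  have hB0 : (0:ℝ) < b := by linarith
  have hC0 : (0:ℝ) < C := by linarith
  have hS0 : (0:ℝ) < S := by linarith
  set N : ℝ := (n:ℝ) with hNdef
  set B : ℝ := (b:ℝ) with hBdef
  have hεabs : ε = 1 ∨ ε = -1 := by
    have h : (ε - 1) * (ε + 1) = 0 := by linear_combination hE
    rcases mul_eq_zero.mp h with h | h
    · left; linarith
    · right; linarith
  set K : ℝ := p*(1-1/N)^2 + (1-p)*(1/N)^2 with hKdef
  have hp1' : (0:ℝ) ≤ 1 - p := by linarith
  have hKnn : 0 ≤ K := by positivity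
  set t : ℝ := ε*(p - 1/N)*α + S*α^2*K with htdef
  have hbase : p * (1 + α*(ε*(1-1/N)) + S*α^2*(ε*(1-1/N))^2)
      + (1-p) * (1 + α*(-(ε/N)) + S*α^2*(-(ε/N))^2) = 1 + t := by
    rw [htdef, hKdef]
    linear_combination (S*α^2*(p*(1-1/N)^2 + (1-p)*(1/N)^2)) * hE
  rw [hbase]
  set q : ℝ := α * B / N with hqdef
  have hq0 : 0 < q := by positivity
  rw [le_div_iff₀ (by positivity : (0:ℝ) < 2*C*S*B)] at hα
  have hqS : 2*C*S*q ≤ 1 := by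
    rw [hqdef, show 2*C*S*(α*B/N) = α * (2*C*S*B) / N by ring, div_le_one hN0]
    linarith
  have hαq : α ≤ q := by
    rw [hqdef, le_div_iff₀ hN0]
    have := mul_le_mul_of_nonneg_left hNB hα0.le
    linarith
  have hα1 : α < 1 := by
    have h2CS : (2:ℝ) ≤ 2*C*S := by
      have := mul_le_mul_of_nonneg_left hS (show (0:ℝ) ≤ 2*C by linarith)
      linarith
    have h1 : 2*α ≤ 2*C*S*α := by
      have := mul_le_mul_of_nonneg_right h2CS hα0.le; linarith
    have h2 : 2*C*S*α ≤ 2*C*S*q := by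
      have := mul_le_mul_of_nonneg_left hαq (show (0:ℝ) ≤ 2*C*S by positivity); linarith
    linarith
  have hinvN : 1/N ≤ 1 := by rw [div_le_one hN0]; exact hN
  have hinvN0 : 0 < 1/N := by positivity
  have h1CN : 1/N ≤ C/N := by
    have := mul_le_mul_of_nonneg_right hC.le hinvN0.le
    calc 1/N = 1 * (1/N) := by ring
    _ ≤ C * (1/N) := this
    _ = C/N := by ring
  have hpN : p - 1/N ≤ C/N := by linarith
  have hpN' : -(C/N) ≤ p - 1/N := by linarith
  set V : ℝ := ε*(p - 1/N)*α*B with hVdef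
  set R : ℝ := S*α^2*K*B with hRdef
  have hBt : B*t = V + R := by rw [htdef, hVdef, hRdef]; ring
  have hRnn : 0 ≤ R := by positivity
  have hK_le : K ≤ (C+1)/N := by
    have h2 : (1-1/N)^2 ≤ 1 := sq_one_sub_le hinvN0.le hinvN
    have h3 : (1/N)^2 ≤ 1/N := sq_le_self' hinvN0.le hinvN
    have e1 : p*(1-1/N)^2 ≤ p := by
      have := mul_le_mul_of_nonneg_left h2 hp0; linarith
    have e2 : (1-p)*(1/N)^2 ≤ 1/N := by
      have u1 := mul_le_mul_of_nonneg_left h3 hp1'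
      have u2 := mul_le_mul_of_nonneg_right (show 1-p ≤ 1 from by linarith) hinvN0.le
      linarith
    have h4 : (C+1)/N = C/N + 1/N := by ring
    rw [hKdef]
    linarith
  have hR_le : R ≤ S*(C+1)*q^2 := by
    have h1 := mul_le_mul_of_nonneg_left hK_le (show (0:ℝ) ≤ S*α^2*B by positivity)
    have h2 : S*α^2*B*((C+1)/N) = S*(C+1)*(α*q) := by rw [hqdef]; ring
    have h3 : S*(C+1)*(α*q) ≤ S*(C+1)*(q*q) := by
      have := mul_le_mul_of_nonneg_left (mul_le_mul_of_nonneg_right hαq hq0.le)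
        (show (0:ℝ) ≤ S*(C+1) by positivity)
      linarith
    calc R = S*α^2*B*K := by rw [hRdef]; ring
    _ ≤ S*α^2*B*((C+1)/N) := h1
    _ = S*(C+1)*(α*q) := h2
    _ ≤ S*(C+1)*(q*q) := h3
    _ = S*(C+1)*q^2 := by ring
  have hαB : (0:ℝ) ≤ α*B := by positivity
  have hCq : C*q = (C/N)*(α*B) := by rw [hqdef]; ring
  have u1 := mul_le_mul_of_nonneg_right hpN hαB
  have u2 := mul_le_mul_of_nonneg_right hpN' hαB
  have hV_ub : V ≤ C*q := by
    rcases hεabs with rfl | rfl <;> rw [hVdef, hCq] <;> linarith [u1, u2]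
  have hV_lb : -(C*q) ≤ V := by
    rcases hεabs with rfl | rfl <;> rw [hVdef, hCq] <;> linarith [u1, u2]
  have hqle : S*(C+1)*q ≤ 1 := by
    have := mul_le_mul_of_nonneg_right (show C+1 ≤ 2*C by linarith)
      (show (0:ℝ) ≤ S*q by positivity)
    linarith [hqS]
  have hRq : R ≤ q := by
    have := mul_le_mul_of_nonneg_right hqle hq0.le
    linarith [hR_le]
  have hu_ub : V + R ≤ (C+1)*q := by linarith [hV_ub, hRq]
  have hu_lb : -((C+1)*q) ≤ V + R := by linarith [hV_lb, hRnn, hq0.le]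
  have habs1 : (C+1)*q ≤ 1 := by
    have u1 := mul_le_mul_of_nonneg_right (show C+1 ≤ 2*C by linarith) hq0.le
    have u2 := mul_le_mul_of_nonneg_left hS (show (0:ℝ) ≤ 2*C*q by positivity)
    linarith [hqS]
  have h1t : 0 < 1 + t := by
    have h : -1 ≤ ε*(p-1/N) := by
      rcases hεabs with rfl | rfl <;> linarith [hinvN, hinvN0, hp0, hp1]
    have hq2 : 0 ≤ S*α^2*K := by positivity
    have := mul_le_mul_of_nonneg_right h hα0.le
    rw [htdef]; linarith [hα1]
  have hexp : Real.exp (B*t) ≤ 1 + (V+R) + 13/18*(V+R)^2 := by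
    rw [hBt]
    exact exp_cubic_bound (abs_le.mpr ⟨by linarith, by linarith⟩)
  calc (1+t)^b ≤ (Real.exp t)^b := by
        apply pow_le_pow_left₀ h1t.le
        linarith [Real.add_one_le_exp t]
    _ = Real.exp (B*t) := (Real.exp_nat_mul t b).symm
    _ ≤ 1 + (V+R) + 13/18*(V+R)^2 := hexp
    _ ≤ 1 + V + 5*C^2*S^2*q^2 := by
        have hu2 : (V+R)^2 ≤ ((C+1)*q)^2 := sq_le_sq' (by linarith) (by linarith)
        have hk := mul_le_mul_of_nonneg_right (poly_key hC hS) (sq_nonneg q)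
        linarith [hu2, hR_le, hk]
    _ = 1 + ε*(p - 1/N)*α*B + 5*C^2*S^2*(B/N)*(α^2/N)*B := by
        rw [hVdef, hqdef]; ring

lemma aux_prod {Ω : Type*} {mΩ : MeasurableSpace Ω} {μ : Measure Ω} [IsProbabilityMeasure μ]
    {b : ℕ} (Z w : Fin b → Ω → ℝ)
    (hZmeas : ∀ j, Measurable (Z j)) (hwmeas : ∀ j, Measurable (w j))
    (hindep : iIndepFun (Sum.elim Z w) μ)
    (F : ℝ → ℝ → ℝ≥0∞) (hF : Measurable (Function.uncurry F)) (s : Finset (Fin b)) :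
    ∫⁻ ω, ∏ j ∈ s, F (Z j ω) (w j ω) ∂μ = ∏ j ∈ s, ∫⁻ ω, F (Z j ω) (w j ω) ∂μ := by
  classical
  have hmeasSum : ∀ i : Fin b ⊕ Fin b, Measurable (Sum.elim Z w i) := by
    rintro (i | i)
    · exact hZmeas i
    · exact hwmeas i
  have hFZw : ∀ j, Measurable (fun ω => F (Z j ω) (w j ω)) := fun j =>
    hF.comp ((hZmeas j).prodMk (hwmeas j))
  induction s using Finset.induction_on with
  | empty => simp
  | insert j s hj ih =>
    rw [Finset.prod_insert hj]
    simp only [Finset.prod_insert hj]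
    set T : Finset (Fin b ⊕ Fin b) := s.image Sum.inl ∪ s.image Sum.inr with hT
    have hdisj : Disjoint ({Sum.inl j, Sum.inr j} : Finset (Fin b ⊕ Fin b)) T := by
      simp only [Finset.disjoint_left, Finset.mem_insert, Finset.mem_singleton, hT,
        Finset.mem_union, Finset.mem_image]
      rintro x (rfl | rfl) <;> rintro (⟨i, hi, h⟩ | ⟨i, hi, h⟩) <;>
        simp_all <;> exact hj (h ▸ hi)
    have hpairT := hindep.indepFun_finset {Sum.inl j, Sum.inr j} T hdisj hmeasSum
    have hjl : (Sum.inl j : Fin b ⊕ Fin b) ∈ ({Sum.inl j, Sum.inr j} : Finset (Fin b ⊕ Fin b)) :=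
      by simp
    have hjr : (Sum.inr j : Fin b ⊕ Fin b) ∈ ({Sum.inl j, Sum.inr j} : Finset (Fin b ⊕ Fin b)) :=
      by simp
    let φ : (∀ i : ({Sum.inl j, Sum.inr j} : Finset (Fin b ⊕ Fin b)), ℝ) → ℝ≥0∞ :=
      fun x => F (x ⟨Sum.inl j, hjl⟩) (x ⟨Sum.inr j, hjr⟩)
    have hφ : Measurable φ := by
      have h := hF.comp (f := fun x : (∀ i : ({Sum.inl j, Sum.inr j} : Finset (Fin b ⊕ Fin b)), ℝ)
          => (x ⟨Sum.inl j, hjl⟩, x ⟨Sum.inr j, hjr⟩))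
        ((measurable_pi_apply _).prodMk (measurable_pi_apply _))
      exact h
    have hmemT : ∀ i ∈ s, (Sum.inl i : Fin b ⊕ Fin b) ∈ T ∧ (Sum.inr i : Fin b ⊕ Fin b) ∈ T := by
      intro i hi
      constructor <;> rw [hT] <;> rw [Finset.mem_union]
      · exact Or.inl (Finset.mem_image_of_mem _ hi)
      · exact Or.inr (Finset.mem_image_of_mem _ hi)
    let ψ : (∀ i : T, ℝ) → ℝ≥0∞ :=
      fun x => ∏ i ∈ s.attach,
        F (x ⟨Sum.inl i.1, (hmemT i.1 i.2).1⟩) (x ⟨Sum.inr i.1, (hmemT i.1 i.2).2⟩)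
    have hψ : Measurable ψ := by
      apply Finset.measurable_prod
      intro i _
      have h := hF.comp (f := fun x : (∀ i : T, ℝ)
          => (x ⟨Sum.inl i.1, (hmemT i.1 i.2).1⟩, x ⟨Sum.inr i.1, (hmemT i.1 i.2).2⟩))
        ((measurable_pi_apply _).prodMk (measurable_pi_apply _))
      exact h
    have hcomp := hpairT.comp hφ hψ
    have h1 : (φ ∘ fun a (i : ({Sum.inl j, Sum.inr j} : Finset (Fin b ⊕ Fin b))) =>
        Sum.elim Z w i a) = fun ω => F (Z j ω) (w j ω) := rfl
    have h2 : (ψ ∘ fun a (i : T) => Sum.elim Z w i a) = fun ω => ∏ i ∈ s, F (Z i ω) (w i ω) := by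
      funext a
      exact Finset.prod_attach s fun i => F (Z i a) (w i a)
    rw [h1, h2] at hcomp
    rw [lintegral_mul_eq_lintegral_mul_lintegral_of_indepFun'' (hFZw j).aemeasurable
      (Finset.measurable_prod s fun i _ => hFZw i).aemeasurable hcomp, ih]

lemma alpha_half (n b : ℕ) (C S α : ℝ) (hn : 1 ≤ n) (hnb : n ≤ b) (hC : 1 < C) (hS : 1 ≤ S)
    (hα0 : 0 < α) (hα : α ≤ n / (2*C*S*b)) : α ≤ 1/2 := by
  have hN : (1:ℝ) ≤ (n:ℝ) := by exact_mod_cast hn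
  have hNB : (n:ℝ) ≤ (b:ℝ) := by exact_mod_cast hnb
  have hB0 : (0:ℝ) < b := by linarith
  rw [le_div_iff₀ (by positivity : (0:ℝ) < 2*C*S*(b:ℝ))] at hα
  nlinarith [mul_le_mul_of_nonneg_right (show (2:ℝ) ≤ 2*C*S by nlinarith) hα0.le,
    mul_le_mul_of_nonneg_left hNB (show (0:ℝ) ≤ α by linarith)]

lemma factor_nonneg {S α κ : ℝ} (hS : 1 ≤ S) (hα0 : 0 < α) (hα : α ≤ 1/2) (hκ : -1 ≤ κ) :
    0 ≤ 1 + α*κ + S*α^2*κ^2 := by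
  nlinarith [mul_le_mul_of_nonneg_left hκ hα0.le,
    mul_nonneg (mul_nonneg (by linarith : (0:ℝ) ≤ S) (sq_nonneg α)) (sq_nonneg κ)]


/-- Let `n ≤ b`, `C > 1`, `S ≥ 1`, `0 < α ≤ n/(2CSb)` and `0 ≤ p ≤ C/n`.  Let
`(Z_j)_{j<b}` be Bernoulli(`p`) variables and `(w_j)_{j<b}` weights whose moment
generating function satisfies `E[e^{ακw}] ≤ 1 + ακ + Sα²κ²` for all `κ ∈ [-1,1]`, all
`2b` variables mutually independent.  Then, with `X := Σ_j w_j (Z_j - 1/n)`,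
`E[e^{αX}] ≤ 1 + (p - 1/n)αb + 5C²S²(b/n)(α²/n)b` and
`E[e^{-αX}] ≤ 1 + (1/n - p)αb + 5C²S²(b/n)(α²/n)b`. -/
theorem stmt_3 (n b : ℕ) (hn : 1 ≤ n) (hb : n ≤ b)
    (C S : ℝ) (hC : 1 < C) (hS : 1 ≤ S)
    (α : ℝ) (hα0 : 0 < α) (hα : α ≤ n / (2 * C * S * b))
    (p : ℝ) (hp0 : 0 ≤ p) (hpC : p ≤ C / n)
    (Ω : Type*) (mΩ : MeasurableSpace Ω) (μ : Measure Ω) (hμ : IsProbabilityMeasure μ)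
    (Z w : Fin b → Ω → ℝ)
    (hZmeas : ∀ j, Measurable (Z j)) (hwmeas : ∀ j, Measurable (w j))
    (hZval : ∀ j ω, Z j ω = 0 ∨ Z j ω = 1)
    (hZdist : ∀ j, μ {ω | Z j ω = 1} = ENNReal.ofReal p)
    (hwnn : ∀ j ω, 0 ≤ w j ω)
    (hwmgf : ∀ j (κ : ℝ), -1 ≤ κ → κ ≤ 1 →
      ∫⁻ ω, ENNReal.ofReal (Real.exp (α * κ * w j ω)) ∂μ ≤
        ENNReal.ofReal (1 + α * κ + S * α ^ 2 * κ ^ 2))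
    (hindep : iIndepFun (Sum.elim Z w) μ) :
    (∫⁻ ω, ENNReal.ofReal (Real.exp (α * ∑ j, w j ω * (Z j ω - 1 / n))) ∂μ ≤
      ENNReal.ofReal
        (1 + (p - 1 / n) * α * b + 5 * C ^ 2 * S ^ 2 * (b / n) * (α ^ 2 / n) * b)) ∧
    (∫⁻ ω, ENNReal.ofReal (Real.exp (-(α * ∑ j, w j ω * (Z j ω - 1 / n)))) ∂μ ≤
      ENNReal.ofReal
        (1 + (1 / n - p) * α * b + 5 * C ^ 2 * S ^ 2 * (b / n) * (α ^ 2 / n) * b)) := by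
  haveI := hμ
  have hb1 : 1 ≤ b := le_trans hn hb
  have hN : (1:ℝ) ≤ (n:ℝ) := by exact_mod_cast hn
  have hN0 : (0:ℝ) < (n:ℝ) := by linarith
  have hinvN0 : (0:ℝ) < 1/(n:ℝ) := by positivity
  have hinvN : 1/(n:ℝ) ≤ 1 := by rw [div_le_one hN0]; exact hN
  have hα2 : α ≤ 1/2 := alpha_half n b C S α hn hb hC hS hα0 hα
  have hp1 : p ≤ 1 := by
    have h := hZdist ⟨0, by omega⟩
    have h2 : μ {ω | Z ⟨0, by omega⟩ ω = 1} ≤ 1 := prob_le_one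
    rw [h] at h2
    exact ENNReal.ofReal_le_one.mp h2
  have hp1' : (0:ℝ) ≤ 1 - p := by linarith
  -- measurability of {Z j = 1}
  have hZset : ∀ j, MeasurableSet {ω | Z j ω = 1} := fun j =>
    hZmeas j (measurableSet_singleton (1:ℝ))
  have hZint : ∀ j, ∫⁻ ω, ENNReal.ofReal (Z j ω) ∂μ = ENNReal.ofReal p := by
    intro j
    have h : (fun ω => ENNReal.ofReal (Z j ω))
        = Set.indicator {ω | Z j ω = 1} (1 : Ω → ℝ≥0∞) := by
      funext ω
      rcases hZval j ω with h | h <;>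
        simp [Set.indicator_apply, Set.mem_setOf_eq, h]
    rw [h]
    exact (lintegral_indicator_one (hZset j)).trans (hZdist j)
  have hZint' : ∀ j, ∫⁻ ω, ENNReal.ofReal (1 - Z j ω) ∂μ = ENNReal.ofReal (1-p) := by
    intro j
    have h : (fun ω => ENNReal.ofReal (1 - Z j ω))
        = Set.indicator ({ω | Z j ω = 1}ᶜ) (1 : Ω → ℝ≥0∞) := by
      funext ω
      rcases hZval j ω with h | h <;>
        simp [Set.indicator_apply, Set.mem_setOf_eq, h]
    rw [h]
    rw [show Set.indicator ({ω | Z j ω = 1}ᶜ) (1 : Ω → ℝ≥0∞)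
        = fun a => Set.indicator ({ω | Z j ω = 1}ᶜ) (1 : Ω → ℝ≥0∞) a from rfl]
    rw [lintegral_indicator_one (hZset j).compl,
      measure_compl (hZset j) (measure_ne_top μ _), hZdist j, measure_univ,
      ENNReal.ofReal_sub 1 hp0, ENNReal.ofReal_one]
  -- the main claim, uniform in the sign ε
  have key : ∀ ε : ℝ, ε^2 = 1 →
      ∫⁻ ω, ENNReal.ofReal (Real.exp (ε * (α * ∑ j, w j ω * (Z j ω - 1/(n:ℝ))))) ∂μ ≤
        ENNReal.ofReal (1 + ε*(p - 1/(n:ℝ))*α*(b:ℝ)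
          + 5*C^2*S^2*((b:ℝ)/(n:ℝ))*(α^2/(n:ℝ))*(b:ℝ)) := by
    intro ε hE
    have hεabs : ε = 1 ∨ ε = -1 := by
      have h : (ε - 1) * (ε + 1) = 0 := by linear_combination hE
      rcases mul_eq_zero.mp h with h | h
      · left; linarith
      · right; linarith
    have hi0 : (0:ℝ) < ((n:ℝ))⁻¹ := inv_pos.mpr hN0
    have hi1 : ((n:ℝ))⁻¹ ≤ 1 := by rw [← one_div]; exact hinvN
    have hκ1a : -1 ≤ ε*(1-1/(n:ℝ)) := by
      rcases hεabs with rfl | rfl <;> · simp only [one_div, neg_div, neg_neg]; linarith [hi0, hi1]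
    have hκ1b : ε*(1-1/(n:ℝ)) ≤ 1 := by
      rcases hεabs with rfl | rfl <;> · simp only [one_div, neg_div, neg_neg]; linarith [hi0, hi1]
    have hκ0a : -1 ≤ -(ε/(n:ℝ)) := by
      rcases hεabs with rfl | rfl <;> · simp only [one_div, neg_div, neg_neg]; linarith [hi0, hi1]
    have hκ0b : -(ε/(n:ℝ)) ≤ 1 := by
      rcases hεabs with rfl | rfl <;> · simp only [one_div, neg_div, neg_neg]; linarith [hi0, hi1]
    set F : ℝ → ℝ → ℝ≥0∞ :=
      fun x y => ENNReal.ofReal (Real.exp (ε * (α * (y * (x - 1/(n:ℝ)))))) with hFdef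
    have hFmeas : Measurable (Function.uncurry F) := by
      rw [hFdef]
      apply Measurable.ennreal_ofReal
      apply Measurable.exp
      exact (((measurable_snd.mul (measurable_fst.sub measurable_const))).const_mul α).const_mul ε
    have hrw : ∀ ω, ENNReal.ofReal (Real.exp (ε * (α * ∑ j, w j ω * (Z j ω - 1/(n:ℝ)))))
        = ∏ j : Fin b, F (Z j ω) (w j ω) := by
      intro ω
      have h1 : ε * (α * ∑ j, w j ω * (Z j ω - 1/(n:ℝ)))
          = ∑ j : Fin b, ε * (α * (w j ω * (Z j ω - 1/(n:ℝ)))) := by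
        rw [Finset.mul_sum, Finset.mul_sum]
      rw [h1, Real.exp_sum, ← ENNReal.ofReal_prod_of_nonneg (fun i _ => (Real.exp_pos _).le)]
    -- per-factor quantities
    set A1 : ℝ := 1 + α*(ε*(1-1/(n:ℝ))) + S*α^2*(ε*(1-1/(n:ℝ)))^2 with hA1def
    set A0 : ℝ := 1 + α*(-(ε/(n:ℝ))) + S*α^2*(-(ε/(n:ℝ)))^2 with hA0def
    have hA1nn : 0 ≤ A1 := factor_nonneg hS hα0 hα2 hκ1a
    have hA0nn : 0 ≤ A0 := factor_nonneg hS hα0 hα2 hκ0a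
    have hMnn : 0 ≤ p * A1 + (1-p) * A0 :=
      add_nonneg (mul_nonneg hp0 hA1nn) (mul_nonneg hp1' hA0nn)
    have factor : ∀ j, ∫⁻ ω, F (Z j ω) (w j ω) ∂μ ≤ ENNReal.ofReal (p * A1 + (1-p) * A0) := by
      intro j
      have hsplit : (fun ω => F (Z j ω) (w j ω)) = fun ω =>
          ENNReal.ofReal (Z j ω)
            * ENNReal.ofReal (Real.exp (α * (ε*(1-1/(n:ℝ))) * w j ω))
          + ENNReal.ofReal (1 - Z j ω)
            * ENNReal.ofReal (Real.exp (α * (-(ε/(n:ℝ))) * w j ω)) := by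
        funext ω
        rcases hZval j ω with h | h
        · have e : ε * (α * (w j ω * (Z j ω - 1/(n:ℝ)))) = α * (-(ε/(n:ℝ))) * w j ω := by
            rw [h]; ring
          simp only [hFdef]
          rw [e]
          simp only [h, sub_zero, ENNReal.ofReal_zero, ENNReal.ofReal_one, zero_mul,
            one_mul, zero_add]
        · have e : ε * (α * (w j ω * (Z j ω - 1/(n:ℝ)))) = α * (ε*(1-1/(n:ℝ))) * w j ω := by
            rw [h]; ring
          simp only [hFdef]
          rw [e]
          simp only [h, sub_self, ENNReal.ofReal_zero, ENNReal.ofReal_one, zero_mul,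
            one_mul, add_zero]
      have m1 : Measurable fun ω => ENNReal.ofReal (Z j ω) := (hZmeas j).ennreal_ofReal
      have m2 : Measurable fun ω =>
          ENNReal.ofReal (Real.exp (α * (ε*(1-1/(n:ℝ))) * w j ω)) :=
        (((hwmeas j).const_mul _).exp).ennreal_ofReal
      have m3 : Measurable fun ω => ENNReal.ofReal (1 - Z j ω) :=
        ((measurable_const.sub (hZmeas j))).ennreal_ofReal
      have m4 : Measurable fun ω =>
          ENNReal.ofReal (Real.exp (α * (-(ε/(n:ℝ))) * w j ω)) :=
        (((hwmeas j).const_mul _).exp).ennreal_ofReal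
      have hZw : IndepFun (Z j) (w j) μ :=
        hindep.indepFun (show (Sum.inl j : Fin b ⊕ Fin b) ≠ Sum.inr j by simp)
      have i1 : IndepFun (fun ω => ENNReal.ofReal (Z j ω))
          (fun ω => ENNReal.ofReal (Real.exp (α * (ε*(1-1/(n:ℝ))) * w j ω))) μ := by
        have h := hZw.comp (φ := fun x : ℝ => ENNReal.ofReal x)
          (ψ := fun y : ℝ => ENNReal.ofReal (Real.exp (α * (ε*(1-1/(n:ℝ))) * y)))
          ENNReal.measurable_ofReal (((measurable_id.const_mul _).exp).ennreal_ofReal)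
        exact h
      have i2 : IndepFun (fun ω => ENNReal.ofReal (1 - Z j ω))
          (fun ω => ENNReal.ofReal (Real.exp (α * (-(ε/(n:ℝ))) * w j ω))) μ := by
        have h := hZw.comp (φ := fun x : ℝ => ENNReal.ofReal (1 - x))
          (ψ := fun y : ℝ => ENNReal.ofReal (Real.exp (α * (-(ε/(n:ℝ))) * y)))
          ((measurable_const.sub measurable_id).ennreal_ofReal)
          (((measurable_id.const_mul _).exp).ennreal_ofReal)
        exact h
      rw [hsplit, lintegral_add_left (f := fun ω => ENNReal.ofReal (Z j ω) * ENNReal.ofReal (Real.exp (α * (ε*(1-1/(n:ℝ))) * w j ω))) (m1.mul m2),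
        lintegral_mul_eq_lintegral_mul_lintegral_of_indepFun'' m1.aemeasurable m2.aemeasurable i1,
        lintegral_mul_eq_lintegral_mul_lintegral_of_indepFun'' m3.aemeasurable m4.aemeasurable i2,
        hZint j, hZint' j]
      have b1 := hwmgf j (ε*(1-1/(n:ℝ))) hκ1a hκ1b
      have b0 := hwmgf j (-(ε/(n:ℝ))) hκ0a hκ0b
      calc ENNReal.ofReal p * ∫⁻ ω, ENNReal.ofReal (Real.exp (α * (ε*(1-1/(n:ℝ))) * w j ω)) ∂μ
            + ENNReal.ofReal (1-p) * ∫⁻ ω, ENNReal.ofReal (Real.exp (α * (-(ε/(n:ℝ))) * w j ω)) ∂μ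
          ≤ ENNReal.ofReal p * ENNReal.ofReal A1 + ENNReal.ofReal (1-p) * ENNReal.ofReal A0 := by
            exact add_le_add (mul_le_mul_right b1 _) (mul_le_mul_right b0 _)
        _ = ENNReal.ofReal (p * A1 + (1-p) * A0) := by
            rw [← ENNReal.ofReal_mul hp0, ← ENNReal.ofReal_mul hp1',
              ← ENNReal.ofReal_add (mul_nonneg hp0 hA1nn) (mul_nonneg hp1' hA0nn)]
    calc ∫⁻ ω, ENNReal.ofReal (Real.exp (ε * (α * ∑ j, w j ω * (Z j ω - 1/(n:ℝ))))) ∂μ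
        = ∫⁻ ω, ∏ j : Fin b, F (Z j ω) (w j ω) ∂μ := lintegral_congr hrw
      _ = ∏ j : Fin b, ∫⁻ ω, F (Z j ω) (w j ω) ∂μ :=
          aux_prod Z w hZmeas hwmeas hindep F hFmeas Finset.univ
      _ ≤ ∏ _j : Fin b, ENNReal.ofReal (p * A1 + (1-p) * A0) :=
          Finset.prod_le_prod' fun j _ => factor j
      _ = ENNReal.ofReal (p * A1 + (1-p) * A0) ^ b := by
          rw [Finset.prod_const, Finset.card_univ, Fintype.card_fin]
      _ = ENNReal.ofReal ((p * A1 + (1-p) * A0) ^ b) := (ENNReal.ofReal_pow hMnn b).symm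
      _ ≤ ENNReal.ofReal (1 + ε*(p - 1/(n:ℝ))*α*(b:ℝ)
            + 5*C^2*S^2*((b:ℝ)/(n:ℝ))*(α^2/(n:ℝ))*(b:ℝ)) := by
          apply ENNReal.ofReal_le_ofReal
          rw [hA1def, hA0def]
          exact arith_main n b C S α p ε hn hb hC hS hα0 hα hp0 hp1 hpC hE
  constructor
  · have h1 := key 1 (by norm_num)
    simp only [one_mul] at h1
    exact h1
  · have h2 := key (-1) (by norm_num)
    simp only [neg_one_mul, neg_sub] at h2
    exact h2
end

section
/- Let n be divisible by 4 and let d ≥ 2 be an integer. The probability vector of the d-Choice process, p_i = (i/n)^d − ((i−1)/n)^d for i ∈ {1,…,n}, satisfies condition C1 with parameters δ = 1/4 and ε = 1/2, and condition C2 with parameter C = d. -/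
open Finset

/-- Condition `C2` with parameter `C`: every entry of `p` is at most `C/n`. -/
def CondC2 (n : ℕ) (p : Fin n → ℝ) (C : ℝ) : Prop :=
  ∀ i, p i ≤ C / n

private lemma pow_sub_pow_le_aux (a b : ℝ) (hb : 0 ≤ b) (hab : b ≤ a) (ha : a ≤ 1) :
    ∀ d : ℕ, a ^ d - b ^ d ≤ d * (a - b) := by
  intro d
  induction d with
  | zero => simp
  | succ d ih =>
    have hbd : b ^ d ≤ 1 := pow_le_one₀ hb (hab.trans ha)
    have hbd0 : 0 ≤ b ^ d := pow_nonneg hb d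
    have key : a ^ (d + 1) - b ^ (d + 1) = a * (a ^ d - b ^ d) + (a - b) * b ^ d := by
      ring
    rw [key]
    have h1 : a * (a ^ d - b ^ d) ≤ a ^ d - b ^ d := by
      have hnn : 0 ≤ a ^ d - b ^ d := sub_nonneg.2 (pow_le_pow_left₀ hb hab d)
      nlinarith
    have h2 : (a - b) * b ^ d ≤ a - b := by nlinarith
    push_cast
    nlinarith

private lemma sum_lt_eq (n k d : ℕ) (hk : k ≤ n) :
    ∑ i ∈ Finset.univ.filter (fun i : Fin n => (i : ℕ) < k),
      (((((i : ℕ) + 1 : ℝ)) / n) ^ d - (((i : ℕ) : ℝ) / n) ^ d)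
      = ((k : ℝ) / n) ^ d - 0 ^ d := by
  rw [Finset.sum_filter, Fin.sum_univ_eq_sum_range
    (fun i => if i < k then ((((i : ℕ) + 1 : ℝ)) / n) ^ d - (((i : ℕ) : ℝ) / n) ^ d else 0)]
  rw [← Finset.sum_filter]
  have : (Finset.range n).filter (fun i => i < k) = Finset.range k := by
    ext x; simp; omega
  rw [this]
  have := Finset.sum_range_sub (fun i => (((i : ℕ) : ℝ) / n) ^ d) k
  simp only [Nat.cast_add, Nat.cast_one] at this ⊢
  rw [this]
  norm_num

/-- For `n` divisible by `4` and any integer `d ≥ 2`, the probability vector of the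
`d`-Choice process, `p_i = (i/n)^d - ((i-1)/n)^d` (rank `i`, here `i = (i : Fin n) + 1`),
satisfies condition `C1` with `δ = 1/4`, `ε = 1/2`, and condition `C2` with `C = d`. -/
theorem stmt_7 (n : ℕ) (hn : 4 ∣ n) (hn1 : 1 ≤ n) (d : ℕ) (hd : 2 ≤ d) :
    CondC1 n (fun i : Fin n =>
        (((i : ℕ) + 1 : ℝ) / n) ^ d - (((i : ℕ) : ℝ) / n) ^ d) (1 / 4) (1 / 2) ∧
    CondC2 n (fun i : Fin n =>
        (((i : ℕ) + 1 : ℝ) / n) ^ d - (((i : ℕ) : ℝ) / n) ^ d) (d : ℝ) := by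
  have hn0 : (0 : ℝ) < n := by exact_mod_cast hn1
  constructor
  · constructor
    · -- first part of C1
      intro k hk1 hk2
      have hkn : (k : ℝ) ≤ n / 4 := by linarith [hk2]
      have hkn' : k ≤ n := by
        have : (k : ℝ) ≤ n := by linarith
        exact_mod_cast this
      rw [sum_lt_eq n k d hkn']
      have hd0 : 0 ^ d = (0 : ℝ) := zero_pow (by omega)
      rw [hd0, sub_zero]
      set x : ℝ := (k : ℝ) / n with hx
      have hx0 : 0 ≤ x := by positivity
      have hx4 : x ≤ 1 / 4 := by
        rw [hx, div_le_iff₀ hn0]; linarith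
      have hx1 : x ≤ 1 := by linarith
      have h1 : x ^ d ≤ x ^ 2 := pow_le_pow_of_le_one hx0 hx1 hd
      have h2 : x ^ 2 ≤ (1 / 4) * x := by nlinarith
      have : (1 - 1 / 2) * (k : ℝ) / n = (1 / 2) * x := by
        rw [hx]; ring
      rw [this]
      nlinarith
    · -- second part of C1
      intro k hk1 hk2
      have hk1' : 1 ≤ k := by
        by_contra h
        push_neg at h
        interval_cases k
        simp at hk1
        linarith
      -- sum over i with k ≤ i + 1, i.e. k - 1 ≤ i
      have hsum : ∑ i ∈ Finset.univ.filter (fun i : Fin n => k ≤ (i : ℕ) + 1),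
          (((((i : ℕ) + 1 : ℝ)) / n) ^ d - (((i : ℕ) : ℝ) / n) ^ d)
          = 1 - (((k : ℝ) - 1) / n) ^ d := by
        rw [Finset.sum_filter, Fin.sum_univ_eq_sum_range
          (fun i => if k ≤ i + 1 then ((((i : ℕ) + 1 : ℝ)) / n) ^ d - (((i : ℕ) : ℝ) / n) ^ d else 0)]
        rw [← Finset.sum_filter]
        have heq : (Finset.range n).filter (fun i => k ≤ i + 1) = Finset.Ico (k - 1) n := by
          ext x; simp [Finset.mem_Ico]; omega
        rw [heq]
        rw [Finset.sum_Ico_eq_sub _ (by omega : k - 1 ≤ n)]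
        have t1 := Finset.sum_range_sub (fun i => (((i : ℝ)) / n) ^ d) n
        have t2 := Finset.sum_range_sub (fun i => (((i : ℝ)) / n) ^ d) (k - 1)
        simp only [Nat.cast_add, Nat.cast_one] at t1 t2 ⊢
        rw [t1, t2]
        have hc : ((k - 1 : ℕ) : ℝ) = (k : ℝ) - 1 := by
          have : (1 : ℕ) ≤ k := hk1'
          push_cast [this]
          ring
        rw [hc]
        have : ((n : ℝ)) / n = 1 := div_self (ne_of_gt hn0)
        rw [this, one_pow]
        push_cast
        ring
      rw [hsum]
      set x : ℝ := ((k : ℝ) - 1) / n with hx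
      have hx14 : 1 / 4 ≤ x := by
        rw [hx, le_div_iff₀ hn0]
        have : (1:ℝ)/4 * n + 1 ≤ k := by linarith
        linarith
      have hx0 : 0 ≤ x := by linarith
      have hxk : k ≤ n := hk2
      have hx1 : x ≤ 1 := by
        rw [hx, div_le_one hn0]
        have : (k : ℝ) ≤ n := by exact_mod_cast hk2
        linarith
      have h1 : x ^ d ≤ x ^ 2 := pow_le_pow_of_le_one hx0 hx1 hd
      have goalrw : (1 + 1 / 2 * (1 / 4) / (1 - 1 / 4)) * ((n : ℝ) - k + 1) / n
          = (7 / 6) * (1 - x) := by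
        rw [hx]
        field_simp
        ring
      rw [goalrw]
      nlinarith
  · -- C2
    intro i
    simp only
    have hi : ((i : ℕ) : ℝ) + 1 ≤ n := by exact_mod_cast i.isLt
    have hb : (0 : ℝ) ≤ ((i : ℕ) : ℝ) / n := by positivity
    have hab : ((i : ℕ) : ℝ) / n ≤ (((i : ℕ) : ℝ) + 1) / n := by
      gcongr
      linarith
    have ha1 : (((i : ℕ) : ℝ) + 1) / n ≤ 1 := by
      rw [div_le_one hn0]; exact hi
    have key := pow_sub_pow_le_aux _ _ hb hab ha1 d
    have heq : (((i : ℕ) : ℝ) + 1) / n - ((i : ℕ) : ℝ) / n = 1 / n := by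
      field_simp
      ring
    rw [heq] at key
    calc (((i : ℕ) + 1 : ℝ) / n) ^ d - (((i : ℕ) : ℝ) / n) ^ d
        ≤ (d : ℝ) * (1 / n) := key
      _ = (d : ℝ) / n := by ring
end

section
/- Let p = (p_1,…,p_n) be a probability vector, let δ ∈ (0,1) with δn an integer, and let ε ∈ (0,1). If p satisfies condition D0 (p_i is non-decreasing in i) and condition D1 (p_{δn} ≤ (1−ε)/n), then p satisfies condition C1 with the same parameters δ and ε. -/
set_option maxHeartbeats 1000000


open Finset

/-- If a probability vector `p` satisfies condition `D0` (non-decreasing entries) and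
condition `D1` (`p_{δn} ≤ (1-ε)/n`), then it satisfies condition `C1` with the same
parameters `δ` and `ε`. -/
theorem stmt_8 (n : ℕ) (p : Fin n → ℝ)
    (hp0 : ∀ i, 0 ≤ p i) (hp1 : ∑ i, p i = 1)
    (δ ε : ℝ) (hδ0 : 0 < δ) (hδ1 : δ < 1) (hε0 : 0 < ε) (hε1 : ε < 1)
    (dn : ℕ) (hdn : (dn : ℝ) = δ * n) (hdn1 : 1 ≤ dn)
    (hD0 : ∀ i j : Fin n, i ≤ j → p i ≤ p j)
    (hD1 : ∀ h : dn - 1 < n, p ⟨dn - 1, h⟩ ≤ (1 - ε) / n) :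
    CondC1 n p δ ε := by
  -- basic facts
  have hn : 0 < n := by
    rcases Nat.eq_zero_or_pos n with h | h
    · subst h; simp at hdn; omega
    · exact h
  have hnR : (0:ℝ) < n := by exact_mod_cast hn
  have hdn_lt : dn < n := by
    have : (dn:ℝ) < n := by rw [hdn]; nlinarith
    exact_mod_cast this
  -- ℕ-indexed version of p
  set q : ℕ → ℝ := fun j => if h : j < n then p ⟨j, h⟩ else 0 with hq
  have hq0 : ∀ j, 0 ≤ q j := by
    intro j; simp only [hq]; split <;> [exact hp0 _; exact le_rfl]
  have hqmono : ∀ i j : ℕ, i ≤ j → j < n → q i ≤ q j := by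
    intro i j hij hj
    have hi : i < n := lt_of_le_of_lt hij hj
    simp only [hq, dif_pos hi, dif_pos hj]
    exact hD0 ⟨i, hi⟩ ⟨j, hj⟩ hij
  have hq1 : ∑ j ∈ range n, q j = 1 := by
    rw [← hp1, ← Fin.sum_univ_eq_sum_range]
    exact Finset.sum_congr rfl fun i _ => by simp [hq, i.isLt]
  have hqbound : ∀ j < dn, q j ≤ (1 - ε) / n := by
    intro j hj
    have hj' : j < n := lt_of_lt_of_le hj (le_of_lt hdn_lt)
    have hdn' : dn - 1 < n := by omega
    calc q j ≤ q (dn - 1) := hqmono j (dn-1) (by omega) hdn'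
    _ = p ⟨dn - 1, hdn'⟩ := by simp [hq, hdn']
    _ ≤ (1 - ε) / n := hD1 hdn'
  -- head bound
  have hhead : ∀ k : ℕ, k ≤ dn → ∑ j ∈ range k, q j ≤ (k : ℝ) * ((1 - ε) / n) := by
    intro k hk
    calc ∑ j ∈ range k, q j ≤ (range k).card • ((1 - ε) / n) :=
          Finset.sum_le_card_nsmul _ _ _ (fun j hj => by
            exact hqbound j (lt_of_lt_of_le (mem_range.mp hj) hk))
    _ = (k : ℝ) * ((1 - ε) / n) := by rw [card_range]; simp [nsmul_eq_mul]
  constructor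
  · -- first condition
    intro k hk1 hk2
    have hkdn : k ≤ dn := by
      have : (k:ℝ) ≤ dn := by rw [hdn]; exact hk2
      exact_mod_cast this
    have hkn : k < n := lt_of_le_of_lt hkdn hdn_lt
    have e1 : ∑ i ∈ Finset.univ.filter (fun i : Fin n => (i : ℕ) < k), p i
        = ∑ j ∈ range k, q j := by
      have hfil : (range n).filter (fun j => j < k) = range k := by
        ext j; simp only [mem_filter, mem_range]; omega
      rw [Finset.sum_filter, ← hfil, Finset.sum_filter,
        ← Fin.sum_univ_eq_sum_range (fun j => if j < k then q j else 0) n]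
      refine Finset.sum_congr rfl fun i _ => ?_
      by_cases h : (i:ℕ) < k <;> simp [h, hq, i.isLt]
    rw [e1]
    calc ∑ j ∈ range k, q j ≤ (k : ℝ) * ((1 - ε) / n) := hhead k hkdn
    _ = (1 - ε) * k / n := by ring
  · -- second condition
    intro k hk1 hk2
    have hkdn : dn + 1 ≤ k := by
      have : (dn:ℝ) + 1 ≤ k := by rw [hdn]; exact hk1
      exact_mod_cast this
    set m : ℕ := k - 1 with hm
    have hkm : k = m + 1 := by omega
    have hmdn : dn ≤ m := by omega
    have hmn : m < n := by omega
    -- rewrite the sum as a tail sum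
    have e2 : ∑ i ∈ Finset.univ.filter (fun i : Fin n => k ≤ (i : ℕ) + 1), p i
        = ∑ j ∈ Finset.Ico m n, q j := by
      have : Finset.Ico m n = (range n).filter (fun j => k ≤ j + 1) := by
        ext j; simp [mem_filter]; omega
      rw [Finset.sum_filter, this, Finset.sum_filter,
        ← Fin.sum_univ_eq_sum_range (fun j => if k ≤ j + 1 then q j else 0) n]
      refine Finset.sum_congr rfl fun i _ => ?_
      by_cases h : k ≤ (i:ℕ) + 1 <;> simp [h, hq, i.isLt]
    rw [e2]
    set T : ℝ := ∑ j ∈ Finset.Ico m n, q j with hT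
    set H : ℝ := ∑ j ∈ Finset.Ico dn m, q j with hH
    have hsplit : H + T = ∑ j ∈ Finset.Ico dn n, q j := by
      rw [hH, hT]; exact Finset.sum_Ico_consecutive _ hmdn (le_of_lt hmn)
    have hS : (1:ℝ) - (dn:ℝ) * ((1 - ε)/n) ≤ H + T := by
      rw [hsplit]
      have : ∑ j ∈ range dn, q j + ∑ j ∈ Finset.Ico dn n, q j = 1 := by
        rw [Finset.range_eq_Ico, Finset.sum_Ico_consecutive _ (Nat.zero_le dn) (le_of_lt hdn_lt),
          ← Finset.range_eq_Ico, hq1]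
      have h2 := hhead dn le_rfl
      linarith
    -- bounds with q m
    have hcardT : (Finset.Ico m n).card = n - m := Nat.card_Ico m n
    have hcardH : (Finset.Ico dn m).card = m - dn := Nat.card_Ico dn m
    have hTlow : ((n:ℝ) - m) * q m ≤ T := by
      have := Finset.card_nsmul_le_sum (Finset.Ico m n) q (q m)
        (fun j hj => hqmono m j (Finset.mem_Ico.mp hj).1 (Finset.mem_Ico.mp hj).2)
      rw [hcardT] at this
      have hc : ((n - m : ℕ) : ℝ) = (n:ℝ) - m := by
        rw [Nat.cast_sub (le_of_lt hmn)]
      rw [nsmul_eq_mul, hc] at this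
      exact this
    have hHhigh : H ≤ ((m:ℝ) - dn) * q m := by
      have := Finset.sum_le_card_nsmul (Finset.Ico dn m) q (q m)
        (fun j hj => hqmono j m (le_of_lt (Finset.mem_Ico.mp hj).2) hmn)
      rw [hcardH] at this
      have hc : ((m - dn : ℕ) : ℝ) = (m:ℝ) - dn := by
        rw [Nat.cast_sub hmdn]
      rw [nsmul_eq_mul, hc] at this
      exact this
    have hqm : 0 ≤ q m := hq0 m
    have hMD : (dn:ℝ) ≤ m := by exact_mod_cast hmdn
    have hNM : (m:ℝ) < n := by exact_mod_cast hmn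
    -- key inequality: (N - D) * T ≥ (N - M) * (H + T)
    have hkey : ((n:ℝ) - m) * (H + T) ≤ ((n:ℝ) - dn) * T := by
      nlinarith [mul_le_mul_of_nonneg_left hHhigh (le_of_lt (sub_pos.mpr hNM)),
        mul_le_mul_of_nonneg_left hTlow (sub_nonneg.mpr hMD)]
    have hND : (0:ℝ) < (n:ℝ) - dn := by
      have : (dn:ℝ) < n := by exact_mod_cast hdn_lt
      linarith
    have h1δ : (0:ℝ) < 1 - δ := by linarith
    -- express δ in terms of dn and n
    have hδeq : δ = (dn:ℝ) / n := by field_simp [hdn]; exact hdn.symm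
    have hkR : (k:ℝ) = (m:ℝ) + 1 := by rw [hkm]; push_cast; ring
    have htarget : (1 + ε * δ / (1 - δ)) * ((n : ℝ) - k + 1) / n
        = ((n:ℝ) - m) * ((n:ℝ) - dn + ε * dn) / (((n:ℝ) - dn) * n) := by
      rw [hkR, hδeq]
      have hδ' : 1 - (dn:ℝ)/n = ((n:ℝ) - dn)/n := by field_simp
      rw [hδ']
      field_simp
      ring
    rw [htarget, div_le_iff₀ (by positivity)]
    -- from hS : (N - D + ε D)/N ≤ H + T  (after clearing denominators)
    have hS' : (n:ℝ) - dn + ε * dn ≤ (H + T) * n := by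
      have heq : (1:ℝ) - (dn:ℝ) * ((1 - ε)/n) = ((n:ℝ) - dn + ε * dn) / n := by
        field_simp; ring
      rw [heq, div_le_iff₀ hnR] at hS
      exact hS
    have hA := mul_le_mul_of_nonneg_right hkey (le_of_lt hnR)
    have hB := mul_le_mul_of_nonneg_left hS' (le_of_lt (sub_pos.mpr hNM))
    linarith [hA, hB]
end

section
/- Consider the batched allocation model with batch size b ≥ n, any probability vector p, and balls whose weights are i.i.d. from a weight distribution W with constants λ > 0 and S > 1. Let κ > 0 be a constant and c > 0. For all sufficiently large n: if for some m ≥ 0 that is a multiple of b one has P(y_1^m ≤ c) ≥ 1 − n^{−κ}, then for every t ∈ [m − b, m], P( y_1^t ≤ c + (2·ln S/λ)·(b/n) ) ≥ 1 − 2n^{−κ}; and if P(−y_n^m ≤ c) ≥ 1 − n^{−κ}, then for every t ∈ [m, m + b], P( −y_n^t ≤ c + (2·ln S/λ)·(b/n) ) ≥ 1 − 2n^{−κ}. -/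
open MeasureTheory ProbabilityTheory Finset Real
open scoped ENNReal

/-- Measurable space structure on the mixed family of rank choices (`Fin n`-valued)
and weights (`ℝ`-valued). -/
def mixMS (n : ℕ) : ∀ j : ℕ ⊕ ℕ, MeasurableSpace (Sum.elim (fun _ => Fin n) (fun _ => ℝ) j)
  | Sum.inl _ => show MeasurableSpace (Fin n) from inferInstance
  | Sum.inr _ => show MeasurableSpace ℝ from inferInstance

/-- The mixed family of random variables: rank choices `R t` and weights `w t`. -/
def mixFun {Ω : Type*} {n : ℕ} (R : ℕ → Ω → Fin n) (w : ℕ → Ω → ℝ) :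
    ∀ j : ℕ ⊕ ℕ, Ω → Sum.elim (fun _ => Fin n) (fun _ => ℝ) j
  | Sum.inl t => R t
  | Sum.inr t => w t

/-- **The batched allocation model** with `n` bins, batch size `b`, probability vector
`p`, rank choices `R`, weights `w`, ranking rule `σ` and load process `x`:
ranks are distributed according to `p`; ranks and weights are mutually independent and
the weights are identically distributed; `σ v` lists the bins in non-increasing order of
load `v` (`σ v i` is the bin of rank `i+1`, ties broken by the fixed rule `σ`); all bins
start empty; and ball `t` (belonging to the batch starting at time `b·⌊t/b⌋`) of weight
`w t` is placed into the bin whose rank at the beginning of its batch is `R t`. -/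
def IsBatchedModel {Ω : Type*} [MeasurableSpace Ω] (μ : Measure Ω) (n b : ℕ)
    (p : Fin n → ℝ) (R : ℕ → Ω → Fin n) (w : ℕ → Ω → ℝ)
    (σ : (Fin n → ℝ) → Equiv.Perm (Fin n)) (x : ℕ → Fin n → Ω → ℝ) : Prop :=
  (∀ t, Measurable (R t)) ∧
  (∀ t, Measurable (w t)) ∧
  (∀ t (i : Fin n), μ {ω | R t ω = i} = ENNReal.ofReal (p i)) ∧
  iIndepFun (m := mixMS n) (mixFun R w) μ ∧
  (∀ s t : ℕ, μ.map (w s) = μ.map (w t)) ∧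
  (∀ (v : Fin n → ℝ) (i j : Fin n), i ≤ j → v (σ v j) ≤ v (σ v i)) ∧
  (∀ i ω, x 0 i ω = 0) ∧
  (∀ t i ω, x (t + 1) i ω =
    x t i ω + (if σ (fun j => x (b * (t / b)) j ω) (R t ω) = i then w t ω else 0))

/-- Auxiliary family of measurable sets on the mixed index type. -/
def auxSets (n : ℕ) (sets : ℕ → Set ℝ) :
    ∀ j : ℕ ⊕ ℕ, Set (Sum.elim (fun _ => Fin n) (fun _ => ℝ) j)
  | Sum.inl _ => Set.univ
  | Sum.inr t => sets t

lemma w_iIndep {Ω : Type} [MeasurableSpace Ω] {μ : Measure Ω} {n : ℕ}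
    {R : ℕ → Ω → Fin n} {w : ℕ → Ω → ℝ}
    (h : iIndepFun (m := mixMS n) (mixFun R w) μ) :
    iIndepFun (m := fun _ : ℕ => (inferInstance : MeasurableSpace ℝ)) w μ := by
  rw [iIndepFun_iff_measure_inter_preimage_eq_mul] at h ⊢
  intro S sets hsets
  have key := h (S.map ⟨Sum.inr, Sum.inr_injective⟩) (sets := auxSets n sets) ?_
  · have h1 : (⋂ j ∈ S.map ⟨Sum.inr, Sum.inr_injective⟩,
        mixFun R w j ⁻¹' auxSets n sets j) = ⋂ t ∈ S, w t ⁻¹' sets t := by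
      ext ω
      simp only [Set.mem_iInter, Finset.mem_map, Function.Embedding.coeFn_mk]
      constructor
      · intro hh t ht
        exact hh (Sum.inr t) ⟨t, ht, rfl⟩
      · rintro hh j ⟨t, ht, rfl⟩
        exact hh t ht
    have h2 : (∏ j ∈ S.map ⟨Sum.inr, Sum.inr_injective⟩,
        μ (mixFun R w j ⁻¹' auxSets n sets j)) = ∏ t ∈ S, μ (w t ⁻¹' sets t) := by
      rw [Finset.prod_map]
      rfl
    rw [h1, h2] at key
    exact key
  · rintro j hj
    rcases Finset.mem_map.1 hj with ⟨t, ht, rfl⟩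
    exact hsets t ht

lemma exp_factor {Ω : Type} [MeasurableSpace Ω] {μ : Measure Ω} [IsProbabilityMeasure μ]
    {w : ℕ → Ω → ℝ} (hmeas : ∀ t, Measurable (w t))
    (hindep : iIndepFun (m := fun _ : ℕ => (inferInstance : MeasurableSpace ℝ)) w μ)
    (lam : ℝ) (F : Finset ℕ) :
    ∫⁻ ω, ENNReal.ofReal (Real.exp (lam * ∑ s ∈ F, w s ω)) ∂μ =
      ∏ s ∈ F, ∫⁻ ω, ENNReal.ofReal (Real.exp (lam * w s ω)) ∂μ := by
  classical
  induction F using Finset.induction with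
  | empty => simp
  | @insert a F ha ih =>
    have hφ : Measurable (fun r : ℝ => ENNReal.ofReal (Real.exp (lam * r))) :=
      ENNReal.measurable_ofReal.comp (Real.measurable_exp.comp (measurable_const_mul lam))
    have hsum : IndepFun (w a) (∑ j ∈ F, w j) μ :=
      (hindep.indepFun_finsetSum_of_notMem hmeas ha).symm
    have hind2 : IndepFun (fun ω => ENNReal.ofReal (Real.exp (lam * w a ω)))
        (fun ω => ENNReal.ofReal (Real.exp (lam * ∑ s ∈ F, w s ω))) μ := by
      have := hsum.comp hφ hφ
      convert this using 2
      all_goals simp only [Function.comp_apply, Finset.sum_apply]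
    have hma : Measurable (fun ω => ENNReal.ofReal (Real.exp (lam * w a ω))) :=
      hφ.comp (hmeas a)
    have hmF : Measurable (fun ω => ENNReal.ofReal (Real.exp (lam * ∑ s ∈ F, w s ω))) :=
      hφ.comp (Finset.measurable_sum F (fun s _ => hmeas s))
    rw [Finset.prod_insert ha, ← ih]
    have heq : ∀ ω, ENNReal.ofReal (Real.exp (lam * ∑ s ∈ insert a F, w s ω)) =
        ENNReal.ofReal (Real.exp (lam * w a ω)) *
        ENNReal.ofReal (Real.exp (lam * ∑ s ∈ F, w s ω)) := by
      intro ω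
      rw [Finset.sum_insert ha, mul_add, Real.exp_add,
        ENNReal.ofReal_mul (Real.exp_nonneg _)]
    simp_rw [heq]
    exact lintegral_mul_eq_lintegral_mul_lintegral_of_indepFun'' hma.aemeasurable
      hmF.aemeasurable hind2

lemma tail_bound {Ω : Type} [MeasurableSpace Ω] {μ : Measure Ω} [IsProbabilityMeasure μ]
    {w : ℕ → Ω → ℝ} (hmeas : ∀ t, Measurable (w t))
    {lam S : ℝ} (hlam : 0 < lam) (hS : 1 < S)
    (hfac : ∀ F : Finset ℕ,
      ∫⁻ ω, ENNReal.ofReal (Real.exp (lam * ∑ s ∈ F, w s ω)) ∂μ =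
        ∏ s ∈ F, ∫⁻ ω, ENNReal.ofReal (Real.exp (lam * w s ω)) ∂μ)
    (hmom : ∀ t, ∫⁻ ω, ENNReal.ofReal (Real.exp (lam * w t ω)) ∂μ ≤ ENNReal.ofReal S)
    (b : ℕ) (F : Finset ℕ) (hF : F.card ≤ b) :
    μ {ω | 2 * Real.log S / lam * b < ∑ s ∈ F, w s ω} ≤ ENNReal.ofReal (1 / S ^ b) := by
  have hS0 : (0:ℝ) < S := lt_trans one_pos hS
  set K : ℝ := 2 * Real.log S / lam * b with hKdef
  have hg : Measurable (fun ω => ENNReal.ofReal (Real.exp (lam * ∑ s ∈ F, w s ω))) :=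
    (ENNReal.measurable_ofReal.comp (Real.measurable_exp.comp (measurable_const_mul lam))).comp
      (Finset.measurable_sum F (fun s _ => hmeas s))
  have markov := mul_meas_ge_le_lintegral₀ (μ := μ) hg.aemeasurable
    (ENNReal.ofReal (Real.exp (lam * K)))
  have hsub : {ω | K < ∑ s ∈ F, w s ω} ⊆
      {ω | ENNReal.ofReal (Real.exp (lam * K)) ≤
        ENNReal.ofReal (Real.exp (lam * ∑ s ∈ F, w s ω))} := by
    intro ω hω
    exact ENNReal.ofReal_le_ofReal (Real.exp_le_exp.2
      (mul_le_mul_of_nonneg_left (le_of_lt hω) (le_of_lt hlam)))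
  have hE : ∫⁻ ω, ENNReal.ofReal (Real.exp (lam * ∑ s ∈ F, w s ω)) ∂μ ≤
      ENNReal.ofReal S ^ b := by
    rw [hfac F]
    calc ∏ s ∈ F, ∫⁻ ω, ENNReal.ofReal (Real.exp (lam * w s ω)) ∂μ
        ≤ ENNReal.ofReal S ^ F.card := Finset.prod_le_pow_card _ _ _ (fun s _ => hmom s)
      _ ≤ ENNReal.ofReal S ^ b := by
          apply pow_le_pow_right₀ _ hF
          exact ENNReal.one_le_ofReal.2 (le_of_lt hS)
  have hne0 : ENNReal.ofReal (Real.exp (lam * K)) ≠ 0 := by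
    simp [ENNReal.ofReal_eq_zero, not_le, Real.exp_pos]
  have hnetop : ENNReal.ofReal (Real.exp (lam * K)) ≠ ⊤ := ENNReal.ofReal_ne_top
  have step : μ {ω | K < ∑ s ∈ F, w s ω} ≤
      ENNReal.ofReal S ^ b / ENNReal.ofReal (Real.exp (lam * K)) := by
    rw [ENNReal.le_div_iff_mul_le (Or.inl hne0) (Or.inl hnetop)]
    calc μ {ω | K < ∑ s ∈ F, w s ω} * ENNReal.ofReal (Real.exp (lam * K))
        ≤ μ {ω | ENNReal.ofReal (Real.exp (lam * K)) ≤
            ENNReal.ofReal (Real.exp (lam * ∑ s ∈ F, w s ω))} *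
            ENNReal.ofReal (Real.exp (lam * K)) := by
          exact mul_le_mul_left (measure_mono hsub) _
      _ = ENNReal.ofReal (Real.exp (lam * K)) *
            μ {ω | ENNReal.ofReal (Real.exp (lam * K)) ≤
            ENNReal.ofReal (Real.exp (lam * ∑ s ∈ F, w s ω))} := mul_comm _ _
      _ ≤ ∫⁻ ω, ENNReal.ofReal (Real.exp (lam * ∑ s ∈ F, w s ω)) ∂μ := markov
      _ ≤ ENNReal.ofReal S ^ b := hE
  refine le_trans step (le_of_eq ?_)
  have hexp : Real.exp (lam * K) = S ^ (2 * b) := by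
    have h1 : lam * K = ((2 * b : ℕ) : ℝ) * Real.log S := by
      rw [hKdef]; push_cast; field_simp
    rw [h1, Real.exp_nat_mul, Real.exp_log hS0]
  rw [← ENNReal.ofReal_pow (le_of_lt hS0), ← ENNReal.ofReal_div_of_pos (Real.exp_pos _)]
  congr 1
  rw [hexp, two_mul, pow_add, div_mul_eq_div_div, div_self (pow_ne_zero _ (ne_of_gt hS0)),
    one_div]

lemma exists_N (kap S : ℝ) (hkap : 0 < kap) (hS : 1 < S) :
    ∃ N : ℕ, 1 ≤ N ∧ ∀ n : ℕ, N ≤ n → ∀ b : ℕ, n ≤ b → 1 / S ^ b ≤ (n : ℝ) ^ (-kap) := by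
  have hS0 : (0:ℝ) < S := lt_trans one_pos hS
  have hlogS : 0 < Real.log S := Real.log_pos hS
  have hc : 0 < Real.log S / kap := div_pos hlogS hkap
  have hev := Asymptotics.isLittleO_iff.mp Real.isLittleO_log_id_atTop hc
  rw [Filter.eventually_atTop] at hev
  obtain ⟨a, ha⟩ := hev
  refine ⟨⌈a⌉₊ + 1, le_add_self, fun n hn b hb => ?_⟩
  have hn1 : 1 ≤ n := le_trans (Nat.le_add_left 1 ⌈a⌉₊) hn
  have hnR : (1:ℝ) ≤ (n:ℝ) := by exact_mod_cast hn1
  have hna : a ≤ (n:ℝ) := le_trans (Nat.le_ceil a) (by exact_mod_cast le_trans (Nat.le_succ _) hn)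
  have hkey := ha (n:ℝ) hna
  simp only [Real.norm_eq_abs, id] at hkey
  have hlogn : Real.log (n:ℝ) ≤ Real.log S / kap * (n:ℝ) := by
    have h1 : Real.log (n:ℝ) ≤ |Real.log (n:ℝ)| := le_abs_self _
    have h2 : |(n:ℝ)| = (n:ℝ) := abs_of_nonneg (by positivity)
    rw [h2] at hkey
    linarith
  have hmain : kap * Real.log (n:ℝ) ≤ (b:ℝ) * Real.log S := by
    have h3 : kap * (Real.log S / kap * (n:ℝ)) = Real.log S * (n:ℝ) := by
      field_simp
    have h4 : Real.log S * (n:ℝ) ≤ (b:ℝ) * Real.log S := by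
      have : (n:ℝ) ≤ (b:ℝ) := by exact_mod_cast hb
      nlinarith
    nlinarith [mul_le_mul_of_nonneg_left hlogn (le_of_lt hkap)]
  have hpow : (n:ℝ) ^ kap ≤ S ^ b := by
    have h5 : (n:ℝ) ^ kap = Real.exp (kap * Real.log (n:ℝ)) := by
      rw [Real.rpow_def_of_pos (by linarith)]
      ring_nf
    have h6 : (S:ℝ) ^ b = Real.exp ((b:ℝ) * Real.log S) := by
      rw [Real.exp_nat_mul, Real.exp_log hS0]
    rw [h5, h6]
    exact Real.exp_le_exp.2 hmain
  have hpos : (0:ℝ) < (n:ℝ) ^ kap := Real.rpow_pos_of_pos (by linarith) _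
  rw [Real.rpow_neg (by positivity), ← one_div]
  exact one_div_le_one_div_of_le hpos hpow

lemma union_step {Ω : Type} [MeasurableSpace Ω] {μ : Measure Ω}
    {A T Bad : Set Ω} {ε : ℝ} (hε : 0 ≤ ε)
    (hA : 1 - ENNReal.ofReal ε ≤ μ A)
    (hBad : μ Bad ≤ ENNReal.ofReal ε)
    (hsub : A ⊆ T ∪ Bad) :
    1 - ENNReal.ofReal (2 * ε) ≤ μ T := by
  have h1 : μ A ≤ μ T + μ Bad := le_trans (measure_mono hsub) (measure_union_le _ _)
  have h2 : (1:ℝ≥0∞) ≤ μ A + ENNReal.ofReal ε := tsub_le_iff_right.mp hA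
  rw [show (2:ℝ) * ε = ε + ε by ring, ENNReal.ofReal_add hε hε, tsub_le_iff_right]
  calc (1:ℝ≥0∞) ≤ μ A + ENNReal.ofReal ε := h2
    _ ≤ (μ T + μ Bad) + ENNReal.ofReal ε := add_le_add_left h1 _
    _ ≤ (μ T + ENNReal.ofReal ε) + ENNReal.ofReal ε :=
        add_le_add_left (add_le_add_right hBad _) _
    _ = μ T + (ENNReal.ofReal ε + ENNReal.ofReal ε) := by ring

/-- **Smoothing argument.** In the weighted batched setting with batch size `b ≥ n` and
a weight distribution with constants `λ > 0` and `S > 1` (satisfying the moment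
condition of the bounded-weight-moment lemma), for any constant `κ > 0` and all
sufficiently large `n`: if at a time `m` that is a multiple of `b` the maximum
normalized load is at most `c` with probability `≥ 1 - n^{-κ}`, then at every
`t ∈ [m - b, m]` it is at most `c + (2 ln S / λ)·(b/n)` with probability
`≥ 1 - 2n^{-κ}`; and the analogous statement for the minimum normalized load on
`t ∈ [m, m + b]`. -/
theorem stmt_9 (kap : ℝ) (hkap : 0 < kap) (lam S : ℝ) (hlam : 0 < lam) (hS : 1 < S)
    (hSlam : max 1 (1 / lam) ≤ S) :
    ∃ N : ℕ, ∀ n : ℕ, N ≤ n →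
    ∀ b : ℕ, n ≤ b →
    ∀ p : Fin n → ℝ, (∀ i, 0 ≤ p i) → ∑ i, p i = 1 →
    ∀ (Ω : Type) (mΩ : MeasurableSpace Ω) (μ : Measure Ω), IsProbabilityMeasure μ →
    ∀ (R : ℕ → Ω → Fin n) (w : ℕ → Ω → ℝ)
      (σ : (Fin n → ℝ) → Equiv.Perm (Fin n)) (x : ℕ → Fin n → Ω → ℝ),
      IsBatchedModel μ n b p R w σ x →
      (∀ t ω, 0 ≤ w t ω) →
      (∀ t, ∫ ω, w t ω ∂μ = 1) →
      (∀ t (β θ : ℝ), 0 < β → β < min (lam / 2) 1 → -1 ≤ θ → θ ≤ 1 →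
        ∫⁻ ω, ENNReal.ofReal (Real.exp (β * θ * w t ω)) ∂μ ≤
          ENNReal.ofReal (1 + β * θ + S * β ^ 2 * θ ^ 2)) →
      (∀ t, ∫⁻ ω, ENNReal.ofReal (Real.exp (lam * w t ω)) ∂μ ≤ ENNReal.ofReal S) →
    ∀ c : ℝ, 0 < c → ∀ m : ℕ, b ∣ m →
      ((1 - ENNReal.ofReal ((n : ℝ) ^ (-kap)) ≤
          μ {ω | ∀ i : Fin n, x m i ω - (∑ s ∈ Finset.range m, w s ω) / n ≤ c}) →
        ∀ t : ℕ, m - b ≤ t → t ≤ m →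
          1 - ENNReal.ofReal (2 * (n : ℝ) ^ (-kap)) ≤
            μ {ω | ∀ i : Fin n, x t i ω - (∑ s ∈ Finset.range t, w s ω) / n ≤
              c + 2 * Real.log S / lam * ((b : ℝ) / n)}) ∧
      ((1 - ENNReal.ofReal ((n : ℝ) ^ (-kap)) ≤
          μ {ω | ∀ i : Fin n, (∑ s ∈ Finset.range m, w s ω) / n - x m i ω ≤ c}) →
        ∀ t : ℕ, m ≤ t → t ≤ m + b →
          1 - ENNReal.ofReal (2 * (n : ℝ) ^ (-kap)) ≤
            μ {ω | ∀ i : Fin n, (∑ s ∈ Finset.range t, w s ω) / n - x t i ω ≤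
              c + 2 * Real.log S / lam * ((b : ℝ) / n)}) := by
  obtain ⟨N, hN1, hNkey⟩ := exists_N kap S hkap hS
  refine ⟨N, ?_⟩
  intro n hn b hb p hp hp1 Ω mΩ μ hprob R w σ x hmodel hw0 hwint hmom1 hmomS c hc m hm
  obtain ⟨hRmeas, hwmeas, hRp, hIndep, hwid, hσ, hx0, hxrec⟩ := hmodel
  haveI := hprob
  have hwindep := w_iIndep hIndep
  have hfac := exp_factor hwmeas hwindep lam
  have hn1 : 1 ≤ n := le_trans hN1 hn
  have hnR : (0:ℝ) < n := by exact_mod_cast lt_of_lt_of_le Nat.zero_lt_one hn1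
  have hεnn : (0:ℝ) ≤ (n : ℝ) ^ (-kap) := Real.rpow_nonneg (le_of_lt hnR) _
  have hxmono : ∀ s t : ℕ, s ≤ t → ∀ i ω, x s i ω ≤ x t i ω := by
    intro s t hst i ω
    induction t, hst using Nat.le_induction with
    | base => exact le_refl _
    | succ t hst ih =>
      rw [hxrec t i ω]
      have : (0:ℝ) ≤ if σ (fun j => x (b * (t / b)) j ω) (R t ω) = i then w t ω else 0 := by
        split
        · exact hw0 t ω
        · exact le_refl _
      linarith
  have hKn : 2 * Real.log S / lam * (b:ℝ) / n = 2 * Real.log S / lam * ((b:ℝ) / n) := by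
    rw [mul_div_assoc]
  constructor
  · -- max part
    intro hA t htb htm
    have hcard : (Finset.Ico t m).card ≤ b := by
      rw [Nat.card_Ico]; omega
    have hbad := tail_bound hwmeas hlam hS hfac hmomS b (Finset.Ico t m) hcard
    refine union_step hεnn hA (le_trans hbad (ENNReal.ofReal_le_ofReal (hNkey n hn b hb))) ?_
    intro ω hω
    by_cases hB : 2 * Real.log S / lam * (b:ℝ) < ∑ s ∈ Finset.Ico t m, w s ω
    · exact Or.inr hB
    · push_neg at hB
      left
      intro i
      have hsplit : ∑ s ∈ Finset.range m, w s ω =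
          ∑ s ∈ Finset.range t, w s ω + ∑ s ∈ Finset.Ico t m, w s ω := by
        rw [Finset.range_eq_Ico, Finset.range_eq_Ico]
        exact (Finset.sum_Ico_consecutive _ (Nat.zero_le t) htm).symm
      have h1 : x t i ω ≤ x m i ω := hxmono t m htm i ω
      have h2 : x m i ω - (∑ s ∈ Finset.range m, w s ω) / n ≤ c := hω i
      have h3 : (∑ s ∈ Finset.Ico t m, w s ω) / n ≤ 2 * Real.log S / lam * (b:ℝ) / n := by
        gcongr
      have h4 : (∑ s ∈ Finset.range t, w s ω) / n =
          (∑ s ∈ Finset.range m, w s ω) / n - (∑ s ∈ Finset.Ico t m, w s ω) / n := by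
        rw [hsplit]; ring
      rw [← hKn]
      linarith
  · -- min part
    intro hA t htm htb
    have hcard : (Finset.Ico m t).card ≤ b := by
      rw [Nat.card_Ico]; omega
    have hbad := tail_bound hwmeas hlam hS hfac hmomS b (Finset.Ico m t) hcard
    refine union_step hεnn hA (le_trans hbad (ENNReal.ofReal_le_ofReal (hNkey n hn b hb))) ?_
    intro ω hω
    by_cases hB : 2 * Real.log S / lam * (b:ℝ) < ∑ s ∈ Finset.Ico m t, w s ω
    · exact Or.inr hB
    · push_neg at hB
      left
      intro i
      have hsplit : ∑ s ∈ Finset.range t, w s ω =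
          ∑ s ∈ Finset.range m, w s ω + ∑ s ∈ Finset.Ico m t, w s ω := by
        rw [Finset.range_eq_Ico, Finset.range_eq_Ico]
        exact (Finset.sum_Ico_consecutive _ (Nat.zero_le m) htm).symm
      have h1 : x m i ω ≤ x t i ω := hxmono m t htm i ω
      have h2 : (∑ s ∈ Finset.range m, w s ω) / n - x m i ω ≤ c := hω i
      have h3 : (∑ s ∈ Finset.Ico m t, w s ω) / n ≤ 2 * Real.log S / lam * (b:ℝ) / n := by
        gcongr
      have h4 : (∑ s ∈ Finset.range t, w s ω) / n =
          (∑ s ∈ Finset.range m, w s ω) / n + (∑ s ∈ Finset.Ico m t, w s ω) / n := by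
        rw [hsplit]; ring
      rw [← hKn]
      linarith
end

section
/- Let n ≥ 2, let C > 1 be a constant, set γ := min(C − 1, 1/2), and let b ≥ n·log n. Let X be a binomial random variable with b independent trials and success probability q ≥ C/n. Then P( X − b/n ≥ (γ/4)·(b/n) ) ≥ 1 − n^{−γ²/8}. (In the unweighted batched allocation setting with batch size b, X is the number of balls received during the first batch by a bin j with p_j = max_i p_i ≥ C/n, so this says P(y_j^b ≥ (γ/4)·(b/n)) ≥ 1 − n^{−γ²/8}.) -/
open MeasureTheory ProbabilityTheory Real

lemma exp_neg_le_quad {s : ℝ} (hs : 0 ≤ s) : Real.exp (-s) ≤ 1 - s + s ^ 2 / 2 := by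
  have h1 : 1 + s + s ^ 2 / 2 ≤ Real.exp s := by
    have h := Real.sum_le_exp_of_nonneg hs 3
    simp [Finset.sum_range_succ, Nat.factorial] at h
    nlinarith [h]
  have h2 : Real.exp s * Real.exp (-s) = 1 := by rw [← Real.exp_add]; simp
  nlinarith [Real.exp_pos (-s), sq_nonneg (s ^ 2), sq_nonneg s, h1, h2]

set_option maxHeartbeats 1000000 in
/-- Let `γ := min(C-1, 1/2)` with `C > 1` constant, `b ≥ n·log n`, and let `X = Σ Z_j` be a
binomial random variable with `b` independent Bernoulli trials of success probability
`q ≥ C/n`. Then `P(X - b/n ≥ (γ/4)·(b/n)) ≥ 1 - n^{-γ²/8}`. -/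
theorem stmt_13 {Ω : Type*} [MeasurableSpace Ω] (μ : Measure Ω) [IsProbabilityMeasure μ]
    (n b : ℕ) (hn : 2 ≤ n) (C : ℝ) (hC : 1 < C)
    (γ : ℝ) (hγ : γ = min (C - 1) (1 / 2))
    (hb : (n : ℝ) * Real.log n ≤ b)
    (q : ℝ) (hq : C / n ≤ q) (hq1 : q ≤ 1)
    (Z : Fin b → Ω → ℝ)
    (hmeas : ∀ j, Measurable (Z j))
    (hber : ∀ j ω, Z j ω = 0 ∨ Z j ω = 1)
    (hdist : ∀ j, μ {ω | Z j ω = 1} = ENNReal.ofReal q)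
    (hindep : iIndepFun Z μ) :
    1 - ENNReal.ofReal ((n : ℝ) ^ (-(γ ^ 2 / 8))) ≤
      μ {ω | γ / 4 * ((b : ℝ) / n) ≤ (∑ j, Z j ω) - (b : ℝ) / n} := by
  -- basic numeric facts
  have hn0 : (0:ℝ) < n := by positivity
  have hn1 : (1:ℝ) < n := by exact_mod_cast hn.trans_lt' one_lt_two
  have hlog : 0 < Real.log n := Real.log_pos hn1
  obtain ⟨m, hm_def⟩ : ∃ m : ℝ, m = (b : ℝ) / n := ⟨_, rfl⟩
  rw [← hm_def]
  have hmlog : Real.log n ≤ m := by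
    rw [hm_def, le_div_iff₀ hn0]; linarith [hb]
  have hm0 : 0 < m := lt_of_lt_of_le hlog hmlog
  have hb0 : (0:ℝ) < b := by
    have : 0 < m * n := by positivity
    rw [hm_def, div_mul_cancel₀ _ hn0.ne'] at this; exact this
  have hγ0 : 0 < γ := by rw [hγ]; exact lt_min (by linarith) (by norm_num)
  have hγhalf : γ ≤ 1 / 2 := by rw [hγ]; exact min_le_right _ _
  have hCγ : 1 + γ ≤ C := by
    have := min_le_left (C - 1) (1 / 2); rw [← hγ] at this; linarith
  have hq0 : 0 < q := lt_of_lt_of_le (by positivity) hq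
  obtain ⟨a, ha_def⟩ : ∃ a : ℝ, a = m + γ / 4 * m := ⟨_, rfl⟩
  obtain ⟨μ0, hμ0_def⟩ : ∃ μ0 : ℝ, μ0 = (b : ℝ) * q := ⟨_, rfl⟩
  have hμ0m : (1 + γ) * m ≤ μ0 := by
    rw [hμ0_def, hm_def]
    calc (1 + γ) * ((b:ℝ)/n) ≤ C * ((b:ℝ)/n) := by
          apply mul_le_mul_of_nonneg_right hCγ (by positivity)
      _ = (b:ℝ) * (C / n) := by ring
      _ ≤ (b:ℝ) * q := by apply mul_le_mul_of_nonneg_left hq hb0.le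
  have hμ0pos : 0 < μ0 := lt_of_lt_of_le (by positivity) hμ0m
  have hμ0m' : m ≤ μ0 := le_trans (by nlinarith) hμ0m
  have hkey : γ / 2 * μ0 ≤ μ0 - a := by
    have h1 : a = (1 + γ/4) * m := by rw [ha_def]; ring
    nlinarith [hμ0m, hm0, hγ0, hγhalf]
  obtain ⟨s, hs_def⟩ : ∃ s : ℝ, s = (μ0 - a) / μ0 := ⟨_, rfl⟩
  have hs0 : 0 < s := by
    rw [hs_def]
    apply div_pos (lt_of_lt_of_le (by positivity) hkey) hμ0pos
  have hsγ : γ / 2 ≤ s := by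
    rw [hs_def, le_div_iff₀ hμ0pos]; nlinarith [hkey]
  obtain ⟨t, ht_def⟩ : ∃ t : ℝ, t = -s := ⟨_, rfl⟩
  -- per-coordinate facts
  have hZint : ∀ j, Integrable (Z j) μ := by
    intro j
    refine (integrable_const (1:ℝ)).mono' (hmeas j).aestronglyMeasurable ?_
    filter_upwards with ω
    rcases hber j ω with h | h <;> simp [h]
  have hZval : ∀ j, ∫ ω, Z j ω ∂μ = q := by
    intro j
    have hset : MeasurableSet {ω | Z j ω = 1} := (hmeas j) (measurableSet_singleton 1)
    have heq : (fun ω => Z j ω) = Set.indicator {ω | Z j ω = 1} (fun _ => (1:ℝ)) := by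
      funext ω
      rcases hber j ω with h | h <;>
        simp [Set.indicator_apply, Set.mem_setOf_eq, h]
    rw [heq, MeasureTheory.integral_indicator_const _ hset, Measure.real, hdist j,
      ENNReal.toReal_ofReal hq0.le, smul_eq_mul, mul_one]
  have hexp_eq : ∀ j ω, Real.exp (t * Z j ω) = 1 + (Real.exp t - 1) * Z j ω := by
    intro j ω
    rcases hber j ω with h | h <;> simp [h]
  have hZexp_int : ∀ j, Integrable (fun ω => Real.exp (t * Z j ω)) μ := by
    intro j
    simp_rw [hexp_eq j]
    exact (integrable_const 1).add ((hZint j).const_mul _)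
  have hmgf : ∀ j, mgf (Z j) μ t = 1 + (Real.exp t - 1) * q := by
    intro j
    rw [mgf]
    simp_rw [hexp_eq j]
    rw [integral_add (integrable_const 1) ((hZint j).const_mul _),
      integral_const, integral_const_mul, hZval j]
    simp
  -- Chernoff bound
  have hXint : Integrable (fun ω => Real.exp (t * (∑ j, Z j) ω)) μ :=
    hindep.integrable_exp_mul_sum hmeas (fun j _ => hZexp_int j)
  have hchern : (μ {ω | (∑ j, Z j) ω ≤ a}).toReal ≤
      Real.exp (-t * a) * mgf (∑ j, Z j) μ t :=
    measure_le_le_exp_mul_mgf a (by rw [ht_def]; linarith) hXint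
  have hprod : mgf (∑ j, Z j) μ t = (1 + (Real.exp t - 1) * q) ^ b := by
    rw [hindep.mgf_sum hmeas]
    simp [hmgf]
  have hbase0 : 0 ≤ 1 + (Real.exp t - 1) * q := by
    nlinarith [Real.exp_pos t, hq0, hq1]
  have hbase : (1 + (Real.exp t - 1) * q) ^ b ≤ Real.exp (μ0 * (Real.exp t - 1)) := by
    calc (1 + (Real.exp t - 1) * q) ^ b ≤ (Real.exp ((Real.exp t - 1) * q)) ^ b := by
          apply pow_le_pow_left₀ hbase0
          linarith [Real.add_one_le_exp ((Real.exp t - 1) * q)]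
      _ = Real.exp (μ0 * (Real.exp t - 1)) := by
          rw [← Real.exp_nat_mul]; congr 1; rw [hμ0_def]; ring
  -- exponent bound
  have h9 : Real.exp (-s) ≤ 1 - s + s ^ 2 / 2 := exp_neg_le_quad hs0.le
  have hexpo : s * a + μ0 * (Real.exp (-s) - 1) ≤ -(γ ^ 2 / 8) * Real.log n := by
    have h1 : s * a + μ0 * (Real.exp (-s) - 1) ≤ s * a + μ0 * (-s + s ^ 2 / 2) := by
      have hh : Real.exp (-s) - 1 ≤ -s + s ^ 2 / 2 := by linarith
      have := mul_le_mul_of_nonneg_left hh hμ0pos.le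
      linarith
    have h2 : s * a + μ0 * (-s + s ^ 2 / 2) = -((μ0 - a) ^ 2 / (2 * μ0)) := by
      rw [hs_def]; field_simp; ring
    have h3 : γ ^ 2 / 8 * Real.log n ≤ (μ0 - a) ^ 2 / (2 * μ0) := by
      have hsq : (γ / 2 * μ0) ^ 2 ≤ (μ0 - a) ^ 2 := by
        apply pow_le_pow_left₀ (by positivity) hkey
      calc γ ^ 2 / 8 * Real.log n ≤ γ ^ 2 / 8 * μ0 := by
            apply mul_le_mul_of_nonneg_left (le_trans hmlog hμ0m') (by positivity)
        _ = (γ / 2 * μ0) ^ 2 / (2 * μ0) := by field_simp; ring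
        _ ≤ (μ0 - a) ^ 2 / (2 * μ0) :=
            (div_le_div_iff_of_pos_right (by positivity : (0:ℝ) < 2 * μ0)).mpr hsq
    rw [h2] at h1
    linarith [h1, h3]
  -- combine
  have hT : (μ {ω | (∑ j, Z j) ω ≤ a}).toReal ≤ (n : ℝ) ^ (-(γ ^ 2 / 8)) := by
    calc (μ {ω | (∑ j, Z j) ω ≤ a}).toReal
        ≤ Real.exp (-t * a) * mgf (∑ j, Z j) μ t := hchern
      _ ≤ Real.exp (s * a) * Real.exp (μ0 * (Real.exp (-s) - 1)) := by
          rw [hprod, ht_def, neg_neg]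
          apply mul_le_mul_of_nonneg_left _ (Real.exp_pos _).le
          rw [ht_def] at hbase
          exact hbase
      _ = Real.exp (s * a + μ0 * (Real.exp (-s) - 1)) := (Real.exp_add _ _).symm
      _ ≤ Real.exp (-(γ ^ 2 / 8) * Real.log n) := Real.exp_le_exp.mpr hexpo
      _ = (n : ℝ) ^ (-(γ ^ 2 / 8)) := by
          rw [Real.rpow_def_of_pos hn0]; ring_nf
  have hTle : μ {ω | (∑ j, Z j) ω ≤ a} ≤ ENNReal.ofReal ((n : ℝ) ^ (-(γ ^ 2 / 8))) := by
    rw [← ENNReal.ofReal_toReal (measure_ne_top μ _)]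
    exact ENNReal.ofReal_le_ofReal hT
  have hXmeas : Measurable (fun ω => ∑ j, Z j ω) :=
    Finset.measurable_sum _ (fun j _ => hmeas j)
  have hS : MeasurableSet {ω | γ / 4 * m ≤ (∑ j, Z j ω) - m} :=
    measurableSet_le measurable_const (hXmeas.sub measurable_const)
  have hsub : {ω | γ / 4 * m ≤ (∑ j, Z j ω) - m}ᶜ ⊆ {ω | (∑ j, Z j) ω ≤ a} := by
    intro ω hω
    simp only [Set.mem_compl_iff, Set.mem_setOf_eq, not_le] at hω
    simp only [Set.mem_setOf_eq, Finset.sum_apply]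
    rw [ha_def]
    linarith
  calc 1 - ENNReal.ofReal ((n : ℝ) ^ (-(γ ^ 2 / 8)))
      ≤ 1 - μ {ω | γ / 4 * m ≤ (∑ j, Z j ω) - m}ᶜ :=
        tsub_le_tsub_left (le_trans (measure_mono hsub) hTle) 1
    _ = μ {ω | γ / 4 * m ≤ (∑ j, Z j ω) - m} := by
        rw [← prob_compl_eq_one_sub hS.compl, compl_compl]
end
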